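/- arXiv:1310.1130 — 3 statements merged into one kernel-verified Lean document; each statement's English description precedes it below -/
import Mathlib

section
/- (Mapping property of the resonant trilinear operator) Let s ≥ 0. There exists a constant C > 0 such that for all φ, ψ, ξ, the resonant operator R_3res satisfies ‖R_3res(φ,ψ,ξ)‖_{Ḣ^s} ≤ C (‖φ‖_{Ḣ^{s−1}} ‖ψ‖_{Ḣ^0} ‖ξ‖_{Ḣ^0} + ‖ξ‖_{Ḣ^s} ‖φ‖_{Ḣ^{−1}} ‖ψ‖_{Ḣ^0} + ‖φ‖_{Ḣ^{s−1}} ‖ψ‖_{Ḣ^0} ‖ξ‖_{Ḣ^0} + ‖ψ‖_{Ḣ^s} ‖φ‖_{Ḣ^{−1}} ‖ξ‖_{Ḣ^0}), whenever the norms on the right-hand side are finite. -/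
open MeasureTheory Set

noncomputable section

/-- The weight `|k|^(2s)` appearing in the `Ḣ^s` norm. -/
def wt (s : ℝ) (k : ℤ) : ℝ := ((|k| : ℤ) : ℝ) ^ (2 * s)

/-- Membership in the homogeneous Sobolev space `Ḣ^s` of sequences indexed by
nonzero integers. -/
def memH (s : ℝ) (u : ℤ → ℂ) : Prop :=
  Summable (fun k : {k : ℤ // k ≠ 0} => wt s k.1 * ‖u k.1‖ ^ 2)

/-- The `Ḣ^s` norm. -/
def hnorm (s : ℝ) (u : ℤ → ℂ) : ℝ :=
  Real.sqrt (∑' k : {k : ℤ // k ≠ 0}, wt s k.1 * ‖u k.1‖ ^ 2)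

/-- The `(Ḣ^s)²` norm of a pair. -/
def hnorm2 (s : ℝ) (u v : ℤ → ℂ) : ℝ :=
  Real.sqrt (hnorm s u ^ 2 + hnorm s v ^ 2)

/-- The conserved energy functional `𝓔(u,v) = 2‖u‖² + 2‖v‖² + ‖u-v‖²` (in `Ḣ^0`). -/
def energyE (u v : ℤ → ℂ) : ℝ :=
  2 * hnorm 0 u ^ 2 + 2 * hnorm 0 v ^ 2 + hnorm 0 (fun k => u k - v k) ^ 2

/-- Projection `𝒫` onto the low Fourier modes `|k| ≤ N`. -/
def Plow (N : ℕ) (u : ℤ → ℂ) : ℤ → ℂ := fun k => if |k| ≤ (N : ℤ) then u k else 0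

/-- Projection `𝒬 = I - 𝒫` onto the high Fourier modes `|k| > N`. -/
def Qhigh (N : ℕ) (u : ℤ → ℂ) : ℤ → ℂ := fun k => if |k| ≤ (N : ℤ) then 0 else u k

/-- The oscillating factor `e^{3 i k k₁ k₂ t}` with `k₂ = k - k₁`. -/
def osc2 (t : ℝ) (k k1 : ℤ) : ℂ :=
  Complex.exp (3 * Complex.I * (k : ℂ) * (k1 : ℂ) * ((k - k1 : ℤ) : ℂ) * (t : ℂ))

/-- The oscillating factor `e^{3 i (k₁+k₂)(k₂+k₃)(k₁+k₃) t}`. -/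
def osc3 (t : ℝ) (k1 k2 k3 : ℤ) : ℂ :=
  Complex.exp (3 * Complex.I * ((k1 + k2 : ℤ) : ℂ) * ((k2 + k3 : ℤ) : ℂ) *
    ((k1 + k3 : ℤ) : ℂ) * (t : ℂ))

/-- The bilinear operator `B₁` at time `t`. -/
def B1 (t : ℝ) (φ ψ : ℤ → ℂ) : ℤ → ℂ := fun k =>
  Complex.I * (k : ℂ) / 2 *
    ∑' k1 : ℤ, if k1 ≠ 0 ∧ k - k1 ≠ 0 then osc2 t k k1 * φ k1 * ψ (k - k1) else 0

/-- The bilinear operator `B₂` at time `t`. -/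
def B2 (t : ℝ) (φ ψ : ℤ → ℂ) : ℤ → ℂ := fun k =>
  (1 / 6 : ℂ) *
    ∑' k1 : ℤ, if k1 ≠ 0 ∧ k - k1 ≠ 0 then
      osc2 t k k1 * φ k1 * ψ (k - k1) / ((k1 : ℂ) * ((k - k1 : ℤ) : ℂ)) else 0

/-- The trilinear operator `R₃` at time `t`. -/
def R3 (t : ℝ) (φ ψ ξ : ℤ → ℂ) : ℤ → ℂ := fun k =>
  ∑' p : ℤ × ℤ,
    if p.1 ≠ 0 ∧ p.2 ≠ 0 ∧ k - p.1 - p.2 ≠ 0 then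
      osc3 t p.1 p.2 (k - p.1 - p.2) * φ p.1 * ψ p.2 * ξ (k - p.1 - p.2) / (p.1 : ℂ)
    else 0

/-- The resonant part `R₃res` (sum over `(k₁+k₂)(k₂+k₃)(k₁+k₃) = 0`). -/
def R3res (φ ψ ξ : ℤ → ℂ) : ℤ → ℂ := fun k =>
  ∑' p : ℤ × ℤ,
    if p.1 ≠ 0 ∧ p.2 ≠ 0 ∧ k - p.1 - p.2 ≠ 0 ∧
        (p.1 + p.2) * (p.2 + (k - p.1 - p.2)) * (p.1 + (k - p.1 - p.2)) = 0 then
      φ p.1 * ψ p.2 * ξ (k - p.1 - p.2) / (p.1 : ℂ)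
    else 0

/-- The nonresonant part `R₃nres` (sum over `(k₁+k₂)(k₂+k₃)(k₁+k₃) ≠ 0`). -/
def R3nres (t : ℝ) (φ ψ ξ : ℤ → ℂ) : ℤ → ℂ := fun k =>
  ∑' p : ℤ × ℤ,
    if p.1 ≠ 0 ∧ p.2 ≠ 0 ∧ k - p.1 - p.2 ≠ 0 ∧
        (p.1 + p.2) * (p.2 + (k - p.1 - p.2)) * (p.1 + (k - p.1 - p.2)) ≠ 0 then
      osc3 t p.1 p.2 (k - p.1 - p.2) * φ p.1 * ψ p.2 * ξ (k - p.1 - p.2) / (p.1 : ℂ)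
    else 0

/-- The operator `R₃nres1(φ,ψ,ξ) = R₃nres(φ,𝒫ψ,ξ) + R₃nres(φ,𝒬ψ,𝒫ξ)`. -/
def R3nres1 (N : ℕ) (t : ℝ) (φ ψ ξ : ℤ → ℂ) : ℤ → ℂ := fun k =>
  R3nres t φ (Plow N ψ) ξ k + R3nres t φ (Qhigh N ψ) (Plow N ξ) k

/-- The trilinear operator `B₃` (nonresonant indices). -/
def B3 (t : ℝ) (φ ψ ξ : ℤ → ℂ) : ℤ → ℂ := fun k =>
  ∑' p : ℤ × ℤ,
    if p.1 ≠ 0 ∧ p.2 ≠ 0 ∧ k - p.1 - p.2 ≠ 0 ∧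
        (p.1 + p.2) * (p.2 + (k - p.1 - p.2)) * (p.1 + (k - p.1 - p.2)) ≠ 0 then
      osc3 t p.1 p.2 (k - p.1 - p.2) * φ p.1 * ψ p.2 * ξ (k - p.1 - p.2) /
        ((p.1 : ℂ) * ((p.1 + p.2 : ℤ) : ℂ) * ((p.2 + (k - p.1 - p.2) : ℤ) : ℂ) *
          ((p.1 + (k - p.1 - p.2) : ℤ) : ℂ))
    else 0

/-- The operator `B₃₀(φ,ψ,ξ) = B₃(φ,𝒬ψ,𝒬ξ)`. -/
def B30 (N : ℕ) (t : ℝ) (φ ψ ξ : ℤ → ℂ) : ℤ → ℂ :=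
  B3 t φ (Qhigh N ψ) (Qhigh N ξ)

/-- The phase `Φ(k₁,k₂,k₃,k₄) = (k₁+k₂+k₃+k₄)³ - k₁³ - k₂³ - k₃³ - k₄³`. -/
def Phi4 (k1 k2 k3 k4 : ℤ) : ℤ :=
  (k1 + k2 + k3 + k4) ^ 3 - k1 ^ 3 - k2 ^ 3 - k3 ^ 3 - k4 ^ 3

/-- The oscillating factor `e^{i Φ(k₁,k₂,k₃,k₄) t}`. -/
def osc4 (t : ℝ) (k1 k2 k3 k4 : ℤ) : ℂ :=
  Complex.exp (Complex.I * ((Phi4 k1 k2 k3 k4 : ℤ) : ℂ) * (t : ℂ))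

/-- The quadrilinear operator `B₄¹`. -/
def B41 (t : ℝ) (φ ψ ξ η : ℤ → ℂ) : ℤ → ℂ := fun k =>
  ∑' q : ℤ × ℤ × ℤ,
    let k1 := q.1; let k2 := q.2.1; let k3 := q.2.2; let k4 := k - k1 - k2 - k3
    if k1 ≠ 0 ∧ k2 ≠ 0 ∧ k3 ≠ 0 ∧ k4 ≠ 0 ∧
        (k1 + k2) * (k1 + k3 + k4) * (k2 + k3 + k4) ≠ 0 then
      osc4 t k1 k2 k3 k4 * φ k1 * ψ k2 * ξ k3 * η k4 /
        (((k1 + k2 : ℤ) : ℂ) * ((k1 + k3 + k4 : ℤ) : ℂ) * ((k2 + k3 + k4 : ℤ) : ℂ))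
    else 0

/-- The quadrilinear operator `B₄²`. -/
def B42 (t : ℝ) (φ ψ ξ η : ℤ → ℂ) : ℤ → ℂ := fun k =>
  ∑' q : ℤ × ℤ × ℤ,
    let k1 := q.1; let k2 := q.2.1; let k3 := q.2.2; let k4 := k - k1 - k2 - k3
    if k1 ≠ 0 ∧ k2 ≠ 0 ∧ k3 ≠ 0 ∧ k4 ≠ 0 ∧
        (k1 + k2) * (k1 + k3 + k4) * (k2 + k3 + k4) ≠ 0 then
      osc4 t k1 k2 k3 k4 * ((k3 + k4 : ℤ) : ℂ) * φ k1 * ψ k2 * ξ k3 * η k4 /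
        ((k1 : ℂ) * ((k1 + k2 : ℤ) : ℂ) * ((k1 + k3 + k4 : ℤ) : ℂ) *
          ((k2 + k3 + k4 : ℤ) : ℂ))
    else 0

/-- The quadrilinear operator `B₄ = B₄¹ + B₄²`. -/
def B4 (t : ℝ) (φ ψ ξ η : ℤ → ℂ) : ℤ → ℂ := fun k =>
  B41 t φ ψ ξ η k + B42 t φ ψ ξ η k

/-- Right-hand side (before the `ik/2` factor and integration) of the `u`-equation
of the transformed Majda–Biello system. -/
def mbRHSu (u v : ℝ → ℤ → ℂ) (τ : ℝ) (k : ℤ) : ℂ :=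
  ∑' k1 : ℤ, if k1 ≠ 0 ∧ k - k1 ≠ 0 then
    osc2 τ k k1 * (u τ k1 * v τ (k - k1) - u τ k1 * u τ (k - k1)) else 0

/-- Right-hand side (before the `ik/2` factor and integration) of the `v`-equation
of the transformed Majda–Biello system. -/
def mbRHSv (u v : ℝ → ℤ → ℂ) (τ : ℝ) (k : ℤ) : ℂ :=
  ∑' k1 : ℤ, if k1 ≠ 0 ∧ k - k1 ≠ 0 then
    osc2 τ k k1 * (u τ k1 * v τ (k - k1) - v τ k1 * v τ (k - k1)) else 0

/-- `(u,v)` is a solution of the transformed Majda–Biello system on `[0,T]`: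
it belongs to `L^∞([0,T];(Ḣ^0)²)` and satisfies the integrated equations. -/
def IsMBSolution (T : ℝ) (u v : ℝ → ℤ → ℂ) : Prop :=
  (∃ M : ℝ, ∀ t ∈ Icc (0 : ℝ) T,
      memH 0 (u t) ∧ memH 0 (v t) ∧ hnorm2 0 (u t) (v t) ≤ M) ∧
  ∀ k : ℤ, k ≠ 0 → ∀ t ∈ Icc (0 : ℝ) T,
    (u t k - u 0 k = Complex.I * (k : ℂ) / 2 * (∫ τ in (0 : ℝ)..t, mbRHSu u v τ k)) ∧
    (v t k - v 0 k = Complex.I * (k : ℂ) / 2 * (∫ τ in (0 : ℝ)..t, mbRHSv u v τ k))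

/-- The (finite) right-hand side of the `u`-equation of the `N`-th Galerkin system. -/
def galRHSu (N : ℕ) (t : ℝ) (f g : ℤ → ℂ) (k : ℤ) : ℂ :=
  Complex.I * (k : ℂ) / 2 * ∑ k1 ∈ Finset.Icc (-(N : ℤ)) (N : ℤ),
    (if k1 ≠ 0 ∧ k - k1 ≠ 0 ∧ |k - k1| ≤ (N : ℤ) then
      osc2 t k k1 * (f k1 * g (k - k1) - f k1 * f (k - k1)) else 0)

/-- The (finite) right-hand side of the `v`-equation of the `N`-th Galerkin system. -/
def galRHSv (N : ℕ) (t : ℝ) (f g : ℤ → ℂ) (k : ℤ) : ℂ :=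
  Complex.I * (k : ℂ) / 2 * ∑ k1 ∈ Finset.Icc (-(N : ℤ)) (N : ℤ),
    (if k1 ≠ 0 ∧ k - k1 ≠ 0 ∧ |k - k1| ≤ (N : ℤ) then
      osc2 t k k1 * (f k1 * g (k - k1) - g k1 * g (k - k1)) else 0)

/-- `(u,v)` solves the `N`-th Galerkin system on the set `S` with initial data
`(uin, vin)`. -/
def IsGalerkinSolution (N : ℕ) (uin vin : ℤ → ℂ) (S : Set ℝ) (u v : ℝ → ℤ → ℂ) : Prop :=
  (∀ k : ℤ, k ≠ 0 → u 0 k = uin k ∧ v 0 k = vin k) ∧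
  ∀ t ∈ S, ∀ k : ℤ, k ≠ 0 →
    HasDerivWithinAt (fun τ : ℝ => u τ k)
      (if |k| ≤ (N : ℤ) then galRHSu N t (u t) (v t) k else 0) S t ∧
    HasDerivWithinAt (fun τ : ℝ => v τ k)
      (if |k| ≤ (N : ℤ) then galRHSv N t (u t) (v t) k else 0) S t

section R3resAux

open Real

local notation "Z0" => {k : ℤ // k ≠ 0}

private lemma cs_tsum {ι : Type*} (a b : ι → ℝ) (ha0 : ∀ i, 0 ≤ a i) (hb0 : ∀ i, 0 ≤ b i)
    (ha : Summable fun i => a i ^ 2) (hb : Summable fun i => b i ^ 2) :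
    Summable (fun i => a i * b i) ∧
      ∑' i, a i * b i ≤ Real.sqrt (∑' i, a i ^ 2) * Real.sqrt (∑' i, b i ^ 2) := by
  have hsum : Summable (fun i => a i * b i) := by
    refine Summable.of_nonneg_of_le (fun i => mul_nonneg (ha0 i) (hb0 i)) (fun i => ?_)
      ((ha.add hb).div_const 2)
    nlinarith [sq_nonneg (a i - b i)]
  refine ⟨hsum, Summable.tsum_le_of_sum_le hsum fun s => ?_⟩
  calc ∑ i ∈ s, a i * b i
      ≤ Real.sqrt (∑ i ∈ s, a i ^ 2) * Real.sqrt (∑ i ∈ s, b i ^ 2) :=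
        Real.sum_mul_le_sqrt_mul_sqrt s a b
    _ ≤ Real.sqrt (∑' i, a i ^ 2) * Real.sqrt (∑' i, b i ^ 2) := by
        gcongr
        · exact Summable.sum_le_tsum s (fun i _ => sq_nonneg _) ha
        · exact Summable.sum_le_tsum s (fun i _ => sq_nonneg _) hb

private lemma wt_nonneg (s : ℝ) (k : ℤ) : 0 ≤ wt s k :=
  Real.rpow_nonneg (by positivity) _

private lemma wt_base_pos {k : ℤ} (hk : k ≠ 0) : (0 : ℝ) < ((|k| : ℤ) : ℝ) := by
  exact_mod_cast abs_pos.mpr hk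

private lemma wt_zero (k : ℤ) : wt 0 k = 1 := by simp [wt]

private lemma wt_neg_one {k : ℤ} (hk : k ≠ 0) : wt (-1) k = (|(k : ℝ)|⁻¹) ^ 2 := by
  have h : ((|k| : ℤ) : ℝ) = |(k : ℝ)| := by push_cast; ring
  rw [wt, h, show (2 * (-1 : ℝ)) = ((-2 : ℤ) : ℝ) by norm_num, Real.rpow_intCast]
  rw [zpow_neg, inv_pow]
  norm_num

private lemma wt_mul (s : ℝ) {k : ℤ} (hk : k ≠ 0) : wt s k * wt (-1) k = wt (s - 1) k := by
  rw [wt, wt, wt, ← Real.rpow_add (wt_base_pos hk)]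
  norm_num
  ring_nf

private lemma hnorm_sq (s : ℝ) (u : ℤ → ℂ) :
    hnorm s u ^ 2 = ∑' k : Z0, wt s k.1 * ‖u k.1‖ ^ 2 :=
  Real.sq_sqrt (tsum_nonneg fun k => mul_nonneg (wt_nonneg s k.1) (sq_nonneg _))

private lemma hnorm_nonneg (s : ℝ) (u : ℤ → ℂ) : 0 ≤ hnorm s u := Real.sqrt_nonneg _

private def negE : Z0 ≃ Z0 where
  toFun n := ⟨-n.1, neg_ne_zero.mpr n.2⟩
  invFun n := ⟨-n.1, neg_ne_zero.mpr n.2⟩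
  left_inv n := by simp
  right_inv n := by simp

private lemma neg_sq_facts {ψ : ℤ → ℂ} (hψ : memH 0 ψ) :
    Summable (fun n : Z0 => ‖ψ (-n.1)‖ ^ 2) ∧
      ∑' n : Z0, ‖ψ (-n.1)‖ ^ 2 = hnorm 0 ψ ^ 2 := by
  have h0 : Summable (fun n : Z0 => ‖ψ n.1‖ ^ 2) :=
    hψ.congr fun n => by rw [wt_zero, one_mul]
  have hc : Summable ((fun n : Z0 => ‖ψ n.1‖ ^ 2) ∘ negE) := negE.summable_iff.mpr h0
  refine ⟨hc, ?_⟩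
  have := negE.tsum_eq (fun n : Z0 => ‖ψ n.1‖ ^ 2)
  rw [hnorm_sq]
  calc ∑' n : Z0, ‖ψ (-n.1)‖ ^ 2 = ∑' n : Z0, ‖ψ n.1‖ ^ 2 := this
    _ = ∑' n : Z0, wt 0 n.1 * ‖ψ n.1‖ ^ 2 := by
        exact tsum_congr fun n => by rw [wt_zero, one_mul]

private lemma key1 (φ ψ : ℤ → ℂ) (hφ : memH (-1) φ) (hψ : memH 0 ψ) :
    Summable (fun n : Z0 => ‖φ n.1‖ * ‖ψ (-n.1)‖ / |(n.1 : ℝ)|) ∧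
      ∑' n : Z0, ‖φ n.1‖ * ‖ψ (-n.1)‖ / |(n.1 : ℝ)| ≤ hnorm (-1) φ * hnorm 0 ψ := by
  have ha2 : (fun n : Z0 => (‖φ n.1‖ / |(n.1 : ℝ)|) ^ 2) =
      fun n : Z0 => wt (-1) n.1 * ‖φ n.1‖ ^ 2 := by
    funext n
    rw [div_pow, wt_neg_one n.2, inv_pow, inv_mul_eq_div]
  have hA : Summable fun n : Z0 => (‖φ n.1‖ / |(n.1 : ℝ)|) ^ 2 := ha2 ▸ hφ
  obtain ⟨hb, hbsum⟩ := neg_sq_facts hψ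
  obtain ⟨hsum, hle⟩ := cs_tsum (fun n : Z0 => ‖φ n.1‖ / |(n.1 : ℝ)|)
    (fun n : Z0 => ‖ψ (-n.1)‖) (fun n => by positivity) (fun n => norm_nonneg _) hA hb
  have heq : (fun n : Z0 => ‖φ n.1‖ / |(n.1 : ℝ)| * ‖ψ (-n.1)‖) =
      fun n : Z0 => ‖φ n.1‖ * ‖ψ (-n.1)‖ / |(n.1 : ℝ)| := by
    funext n; ring
  refine ⟨heq ▸ hsum, ?_⟩
  rw [← heq]
  refine hle.trans (le_of_eq ?_)
  rw [ha2, hbsum, Real.sqrt_sq (hnorm_nonneg 0 ψ)]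
  rfl

private lemma key2 (ψ ξ : ℤ → ℂ) (hψ : memH 0 ψ) (hξ : memH 0 ξ) :
    Summable (fun n : Z0 => ‖ψ n.1‖ * ‖ξ (-n.1)‖) ∧
      ∑' n : Z0, ‖ψ n.1‖ * ‖ξ (-n.1)‖ ≤ hnorm 0 ψ * hnorm 0 ξ := by
  have hA : Summable fun n : Z0 => ‖ψ n.1‖ ^ 2 :=
    hψ.congr fun n => by rw [wt_zero, one_mul]
  obtain ⟨hb, hbsum⟩ := neg_sq_facts hξ
  obtain ⟨hsum, hle⟩ := cs_tsum (fun n : Z0 => ‖ψ n.1‖) (fun n : Z0 => ‖ξ (-n.1)‖)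
    (fun n => norm_nonneg _) (fun n => norm_nonneg _) hA hb
  refine ⟨hsum, hle.trans (le_of_eq ?_)⟩
  rw [hbsum, Real.sqrt_sq (hnorm_nonneg 0 ξ)]
  congr 1
  unfold hnorm
  exact congrArg Real.sqrt (tsum_congr fun n => by rw [wt_zero, one_mul]).symm

set_option maxHeartbeats 1000000 in
private lemma r3res_pointwise (φ ψ ξ : ℤ → ℂ) (hφ : memH (-1) φ) (hψ : memH 0 ψ)
    (hξ0 : memH 0 ξ) {k : ℤ} (hk : k ≠ 0) :
    ‖R3res φ ψ ξ k‖ ≤ hnorm (-1) φ * hnorm 0 ψ * ‖ξ k‖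
      + hnorm 0 ψ * hnorm 0 ξ * (‖φ k‖ / |(k : ℝ)|)
      + hnorm (-1) φ * hnorm 0 ξ * ‖ψ k‖ := by
  classical
  set f : ℤ × ℤ → ℂ := fun p =>
    if p.1 ≠ 0 ∧ p.2 ≠ 0 ∧ k - p.1 - p.2 ≠ 0 ∧
        (p.1 + p.2) * (p.2 + (k - p.1 - p.2)) * (p.1 + (k - p.1 - p.2)) = 0 then
      φ p.1 * ψ p.2 * ξ (k - p.1 - p.2) / (p.1 : ℂ)
    else 0 with hf
  set h1 : ℤ × ℤ → ℝ := fun p =>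
    if p.1 ≠ 0 ∧ p.2 = -p.1 then ‖φ p.1‖ * ‖ψ (-p.1)‖ * ‖ξ k‖ / |(p.1 : ℝ)| else 0 with hh1
  set h2 : ℤ × ℤ → ℝ := fun p =>
    if p.2 ≠ 0 ∧ p.1 = k then ‖ψ p.2‖ * ‖ξ (-p.2)‖ * (‖φ k‖ / |(k : ℝ)|) else 0 with hh2
  set h3 : ℤ × ℤ → ℝ := fun p =>
    if p.1 ≠ 0 ∧ p.2 = k then ‖φ p.1‖ * ‖ξ (-p.1)‖ * ‖ψ k‖ / |(p.1 : ℝ)| else 0 with hh3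
  have h1n : ∀ p, 0 ≤ h1 p := fun p => by rw [hh1]; dsimp only; split <;> positivity
  have h2n : ∀ p, 0 ≤ h2 p := fun p => by rw [hh2]; dsimp only; split <;> positivity
  have h3n : ∀ p, 0 ≤ h3 p := fun p => by rw [hh3]; dsimp only; split <;> positivity
  -- pointwise domination
  have hfle : ∀ p, ‖f p‖ ≤ h1 p + h2 p + h3 p := by
    intro p
    by_cases hc : p.1 ≠ 0 ∧ p.2 ≠ 0 ∧ k - p.1 - p.2 ≠ 0 ∧
        (p.1 + p.2) * (p.2 + (k - p.1 - p.2)) * (p.1 + (k - p.1 - p.2)) = 0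
    · obtain ⟨hc1, hc2, hc3, hc0⟩ := hc
      have hval : ‖f p‖ = ‖φ p.1‖ * ‖ψ p.2‖ * ‖ξ (k - p.1 - p.2)‖ / |(p.1 : ℝ)| := by
        rw [hf]
        simp only [if_pos (⟨hc1, hc2, hc3, hc0⟩ : p.1 ≠ 0 ∧ p.2 ≠ 0 ∧ k - p.1 - p.2 ≠ 0 ∧
          (p.1 + p.2) * (p.2 + (k - p.1 - p.2)) * (p.1 + (k - p.1 - p.2)) = 0)]
        rw [norm_div, norm_mul, norm_mul, Complex.norm_intCast]
      rcases mul_eq_zero.mp hc0 with hc0' | hcase3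
      · rcases mul_eq_zero.mp hc0' with hcase1 | hcase2
        · -- p.1 + p.2 = 0
          have hp2 : p.2 = -p.1 := by omega
          have hk3 : k - p.1 - p.2 = k := by omega
          have hval1 : h1 p = ‖f p‖ := by
            rw [hh1]; dsimp only
            rw [if_pos ⟨hc1, hp2⟩, hval, hk3, hp2]
          linarith [h2n p, h3n p]
        · -- p.2 + (k - p.1 - p.2) = 0, i.e. p.1 = k
          have hp1 : p.1 = k := by omega
          have hk3 : k - p.1 - p.2 = -p.2 := by omega
          have hval2 : h2 p = ‖f p‖ := by
            rw [hh2]; dsimp only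
            rw [if_pos ⟨hc2, hp1⟩, hval, hk3, hp1]
            ring
          linarith [h1n p, h3n p]
      · -- p.1 + (k - p.1 - p.2) = 0, i.e. p.2 = k
        have hp2 : p.2 = k := by omega
        have hk3 : k - p.1 - p.2 = -p.1 := by omega
        have hval3 : h3 p = ‖f p‖ := by
          rw [hh3]; dsimp only
          rw [if_pos ⟨hc1, hp2⟩, hval, hk3, hp2]
          ring
        linarith [h1n p, h2n p]
    · have : f p = 0 := by rw [hf]; exact if_neg hc
      rw [this, norm_zero]
      have := h1n p; have := h2n p; have := h3n p; linarith
  -- the three injections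
  set e1 : Z0 → ℤ × ℤ := fun n => (n.1, -n.1) with he1
  set e2 : Z0 → ℤ × ℤ := fun n => (k, n.1) with he2
  set e3 : Z0 → ℤ × ℤ := fun n => (n.1, k) with he3
  have e1inj : Function.Injective e1 := fun a b hab => Subtype.ext (congrArg Prod.fst hab)
  have e2inj : Function.Injective e2 := fun a b hab => Subtype.ext (congrArg Prod.snd hab)
  have e3inj : Function.Injective e3 := fun a b hab => Subtype.ext (congrArg Prod.fst hab)
  have h1supp : Function.support h1 ⊆ Set.range e1 := by
    intro p hp
    rw [Function.mem_support] at hp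
    by_cases hc : p.1 ≠ 0 ∧ p.2 = -p.1
    · exact ⟨⟨p.1, hc.1⟩, Prod.ext rfl hc.2.symm⟩
    · exact absurd (by rw [hh1]; exact if_neg hc) hp
  have h2supp : Function.support h2 ⊆ Set.range e2 := by
    intro p hp
    rw [Function.mem_support] at hp
    by_cases hc : p.2 ≠ 0 ∧ p.1 = k
    · exact ⟨⟨p.2, hc.1⟩, Prod.ext hc.2.symm rfl⟩
    · exact absurd (by rw [hh2]; exact if_neg hc) hp
  have h3supp : Function.support h3 ⊆ Set.range e3 := by
    intro p hp
    rw [Function.mem_support] at hp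
    by_cases hc : p.1 ≠ 0 ∧ p.2 = k
    · exact ⟨⟨p.1, hc.1⟩, Prod.ext rfl hc.2.symm⟩
    · exact absurd (by rw [hh3]; exact if_neg hc) hp
  have h1zero : ∀ x ∉ Set.range e1, h1 x = 0 := fun x hx => by
    by_contra h; exact hx (h1supp (Function.mem_support.mpr h))
  have h2zero : ∀ x ∉ Set.range e2, h2 x = 0 := fun x hx => by
    by_contra h; exact hx (h2supp (Function.mem_support.mpr h))
  have h3zero : ∀ x ∉ Set.range e3, h3 x = 0 := fun x hx => by
    by_contra h; exact hx (h3supp (Function.mem_support.mpr h))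
  have h1comp : ∀ n : Z0, h1 (e1 n) = ‖φ n.1‖ * ‖ψ (-n.1)‖ / |(n.1 : ℝ)| * ‖ξ k‖ := by
    intro n
    rw [hh1, he1]; dsimp only
    rw [if_pos ⟨n.2, rfl⟩]; ring
  have h2comp : ∀ n : Z0, h2 (e2 n) = ‖ψ n.1‖ * ‖ξ (-n.1)‖ * (‖φ k‖ / |(k : ℝ)|) := by
    intro n
    rw [hh2, he2]; dsimp only
    rw [if_pos ⟨n.2, rfl⟩]
  have h3comp : ∀ n : Z0, h3 (e3 n) = ‖φ n.1‖ * ‖ξ (-n.1)‖ / |(n.1 : ℝ)| * ‖ψ k‖ := by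
    intro n
    rw [hh3, he3]; dsimp only
    rw [if_pos ⟨n.2, rfl⟩]; ring
  obtain ⟨k1s, k1le⟩ := key1 φ ψ hφ hψ
  obtain ⟨k1s', k1le'⟩ := key1 φ ξ hφ hξ0
  obtain ⟨k2s, k2le⟩ := key2 ψ ξ hψ hξ0
  have hs1 : Summable (h1 ∘ e1) := (k1s.mul_right ‖ξ k‖).congr fun n => (h1comp n).symm
  have hs2 : Summable (h2 ∘ e2) :=
    (k2s.mul_right (‖φ k‖ / |(k : ℝ)|)).congr fun n => (h2comp n).symm
  have hs3 : Summable (h3 ∘ e3) := (k1s'.mul_right ‖ψ k‖).congr fun n => (h3comp n).symm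
  have H1 : Summable h1 := (e1inj.summable_iff h1zero).mp hs1
  have H2 : Summable h2 := (e2inj.summable_iff h2zero).mp hs2
  have H3 : Summable h3 := (e3inj.summable_iff h3zero).mp hs3
  have T1 : ∑' p, h1 p ≤ hnorm (-1) φ * hnorm 0 ψ * ‖ξ k‖ := by
    rw [← e1inj.tsum_eq h1supp]
    calc ∑' n : Z0, h1 (e1 n)
        = (∑' n : Z0, ‖φ n.1‖ * ‖ψ (-n.1)‖ / |(n.1 : ℝ)|) * ‖ξ k‖ := by
          rw [← tsum_mul_right]; exact tsum_congr h1comp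
      _ ≤ hnorm (-1) φ * hnorm 0 ψ * ‖ξ k‖ :=
          mul_le_mul_of_nonneg_right k1le (norm_nonneg _)
  have T2 : ∑' p, h2 p ≤ hnorm 0 ψ * hnorm 0 ξ * (‖φ k‖ / |(k : ℝ)|) := by
    rw [← e2inj.tsum_eq h2supp]
    calc ∑' n : Z0, h2 (e2 n)
        = (∑' n : Z0, ‖ψ n.1‖ * ‖ξ (-n.1)‖) * (‖φ k‖ / |(k : ℝ)|) := by
          rw [← tsum_mul_right]; exact tsum_congr h2comp
      _ ≤ hnorm 0 ψ * hnorm 0 ξ * (‖φ k‖ / |(k : ℝ)|) :=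
          mul_le_mul_of_nonneg_right k2le (by positivity)
  have T3 : ∑' p, h3 p ≤ hnorm (-1) φ * hnorm 0 ξ * ‖ψ k‖ := by
    rw [← e3inj.tsum_eq h3supp]
    calc ∑' n : Z0, h3 (e3 n)
        = (∑' n : Z0, ‖φ n.1‖ * ‖ξ (-n.1)‖ / |(n.1 : ℝ)|) * ‖ψ k‖ := by
          rw [← tsum_mul_right]; exact tsum_congr h3comp
      _ ≤ hnorm (-1) φ * hnorm 0 ξ * ‖ψ k‖ :=
          mul_le_mul_of_nonneg_right k1le' (norm_nonneg _)
  have hfs : Summable fun p => ‖f p‖ :=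
    Summable.of_nonneg_of_le (fun p => norm_nonneg _) hfle ((H1.add H2).add H3)
  have hR : R3res φ ψ ξ k = ∑' p, f p := rfl
  calc ‖R3res φ ψ ξ k‖ = ‖∑' p, f p‖ := by rw [hR]
    _ ≤ ∑' p, ‖f p‖ := norm_tsum_le_tsum_norm hfs
    _ ≤ ∑' p, (h1 p + h2 p + h3 p) := Summable.tsum_le_tsum hfle hfs ((H1.add H2).add H3)
    _ = (∑' p, h1 p) + (∑' p, h2 p) + (∑' p, h3 p) := by
        rw [Summable.tsum_add (H1.add H2) H3, Summable.tsum_add H1 H2]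
    _ ≤ _ := add_le_add (add_le_add T1 T2) T3
end R3resAux
set_option maxHeartbeats 1000000 in
/-- Mapping property of the resonant trilinear operator
`R₃res`. -/
theorem r3res_mapping (s : ℝ) (hs : 0 ≤ s) :
    ∃ C : ℝ, 0 < C ∧ ∀ φ ψ ξ : ℤ → ℂ,
      memH (s - 1) φ → memH (-1) φ → memH 0 ψ → memH s ψ → memH 0 ξ → memH s ξ →
      memH s (R3res φ ψ ξ) ∧
      hnorm s (R3res φ ψ ξ) ≤ C *
        (hnorm (s - 1) φ * hnorm 0 ψ * hnorm 0 ξ +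
          hnorm s ξ * hnorm (-1) φ * hnorm 0 ψ +
          hnorm (s - 1) φ * hnorm 0 ψ * hnorm 0 ξ +
          hnorm s ψ * hnorm (-1) φ * hnorm 0 ξ) := by
  refine ⟨2, by norm_num, fun φ ψ ξ hφs1 hφm1 hψ0 hψs hξ0 hξs => ?_⟩
  set P : ℝ := hnorm (-1) φ * hnorm 0 ψ with hP
  set Q : ℝ := hnorm 0 ψ * hnorm 0 ξ with hQ
  set R : ℝ := hnorm (-1) φ * hnorm 0 ξ with hR
  have hg : Summable (fun kk : {k : ℤ // k ≠ 0} =>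
      3 * (P ^ 2 * (wt s kk.1 * ‖ξ kk.1‖ ^ 2) + Q ^ 2 * (wt (s - 1) kk.1 * ‖φ kk.1‖ ^ 2)
        + R ^ 2 * (wt s kk.1 * ‖ψ kk.1‖ ^ 2))) :=
    (((hξs.mul_left _).add (hφs1.mul_left _)).add (hψs.mul_left _)).mul_left 3
  have hpt : ∀ kk : {k : ℤ // k ≠ 0},
      wt s kk.1 * ‖R3res φ ψ ξ kk.1‖ ^ 2 ≤
      3 * (P ^ 2 * (wt s kk.1 * ‖ξ kk.1‖ ^ 2) + Q ^ 2 * (wt (s - 1) kk.1 * ‖φ kk.1‖ ^ 2)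
        + R ^ 2 * (wt s kk.1 * ‖ψ kk.1‖ ^ 2)) := by
    intro kk
    have hb := r3res_pointwise φ ψ ξ hφm1 hψ0 hξ0 kk.2
    rw [← hP, ← hQ, ← hR] at hb
    set A : ℝ := P * ‖ξ kk.1‖ with hA
    set B : ℝ := Q * (‖φ kk.1‖ / |(kk.1 : ℝ)|) with hB
    set D : ℝ := R * ‖ψ kk.1‖ with hD
    have hb2 : ‖R3res φ ψ ξ kk.1‖ ^ 2 ≤ (A + B + D) ^ 2 :=
      pow_le_pow_left₀ (norm_nonneg _) hb 2
    have h3 : (A + B + D) ^ 2 ≤ 3 * (A ^ 2 + B ^ 2 + D ^ 2) := by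
      nlinarith [sq_nonneg (A - B), sq_nonneg (A - D), sq_nonneg (B - D)]
    have hw : wt s kk.1 * (‖φ kk.1‖ / |(kk.1 : ℝ)|) ^ 2 = wt (s - 1) kk.1 * ‖φ kk.1‖ ^ 2 := by
      rw [← wt_mul s kk.2, wt_neg_one kk.2]
      ring
    calc wt s kk.1 * ‖R3res φ ψ ξ kk.1‖ ^ 2
        ≤ wt s kk.1 * (3 * (A ^ 2 + B ^ 2 + D ^ 2)) :=
          mul_le_mul_of_nonneg_left (hb2.trans h3) (wt_nonneg _ _)
      _ = 3 * (P ^ 2 * (wt s kk.1 * ‖ξ kk.1‖ ^ 2) + Q ^ 2 * (wt (s - 1) kk.1 * ‖φ kk.1‖ ^ 2)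
          + R ^ 2 * (wt s kk.1 * ‖ψ kk.1‖ ^ 2)) := by
          rw [hA, hB, hD, mul_pow, mul_pow, mul_pow]
          linear_combination (3 * Q ^ 2) * hw
  have hmem : memH s (R3res φ ψ ξ) :=
    Summable.of_nonneg_of_le (fun kk => mul_nonneg (wt_nonneg _ _) (sq_nonneg _)) hpt hg
  refine ⟨hmem, ?_⟩
  have hsum_le : ∑' kk : {k : ℤ // k ≠ 0}, wt s kk.1 * ‖R3res φ ψ ξ kk.1‖ ^ 2 ≤
      3 * (P ^ 2 * hnorm s ξ ^ 2 + Q ^ 2 * hnorm (s - 1) φ ^ 2 + R ^ 2 * hnorm s ψ ^ 2) := by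
    refine (Summable.tsum_le_tsum hpt hmem hg).trans (le_of_eq ?_)
    rw [tsum_mul_left, Summable.tsum_add ((hξs.mul_left _).add (hφs1.mul_left _)) (hψs.mul_left _),
      Summable.tsum_add (hξs.mul_left _) (hφs1.mul_left _), tsum_mul_left, tsum_mul_left,
      tsum_mul_left, hnorm_sq, hnorm_sq, hnorm_sq]
  set X : ℝ := hnorm (s - 1) φ * hnorm 0 ψ * hnorm 0 ξ with hX
  set Y : ℝ := hnorm s ξ * hnorm (-1) φ * hnorm 0 ψ with hY
  set Z : ℝ := hnorm s ψ * hnorm (-1) φ * hnorm 0 ξ with hZ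
  have hXn : 0 ≤ X := mul_nonneg (mul_nonneg (hnorm_nonneg _ _) (hnorm_nonneg _ _)) (hnorm_nonneg _ _)
  have hYn : 0 ≤ Y := mul_nonneg (mul_nonneg (hnorm_nonneg _ _) (hnorm_nonneg _ _)) (hnorm_nonneg _ _)
  have hZn : 0 ≤ Z := mul_nonneg (mul_nonneg (hnorm_nonneg _ _) (hnorm_nonneg _ _)) (hnorm_nonneg _ _)
  have hY2 : P ^ 2 * hnorm s ξ ^ 2 = Y ^ 2 := by rw [hY, hP]; ring
  have hX2 : Q ^ 2 * hnorm (s - 1) φ ^ 2 = X ^ 2 := by rw [hX, hQ]; ring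
  have hZ2 : R ^ 2 * hnorm s ψ ^ 2 = Z ^ 2 := by rw [hZ, hR]; ring
  have hXYZ : 3 * (P ^ 2 * hnorm s ξ ^ 2 + Q ^ 2 * hnorm (s - 1) φ ^ 2
      + R ^ 2 * hnorm s ψ ^ 2) ≤ (2 * (X + Y + X + Z)) ^ 2 := by
    rw [hY2, hX2, hZ2]
    nlinarith [mul_nonneg hXn hYn, mul_nonneg hXn hZn, mul_nonneg hYn hZn, sq_nonneg X,
      sq_nonneg Y, sq_nonneg Z]
  calc hnorm s (R3res φ ψ ξ)
      ≤ Real.sqrt ((2 * (X + Y + X + Z)) ^ 2) :=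
        Real.sqrt_le_sqrt (hsum_le.trans hXYZ)
    _ = 2 * (X + Y + X + Z) := Real.sqrt_sq (by nlinarith)
end
end

section
/- (Squeezing property of the high-mode bilinear vector operator B_2^Q) Let s ≥ 0 and let N be a positive integer. Then for every t ∈ ℝ the operator 𝐁_2^Q maps (Ḣ^s)² into (Ḣ^s)² and there is a constant C(s), independent of N, such that ‖𝐁_2^Q(u,v)‖_{(Ḣ^s)²} ≤ C(s) (1/N) ‖(u,v)‖_{(Ḣ^s)²}², and ‖𝐁_2^Q(u,v) − 𝐁_2^Q(ũ,ṽ)‖_{(Ḣ^s)²} ≤ C(s) (1/N) ‖(u,v) − (ũ,ṽ)‖_{(Ḣ^s)²} (‖(u,v)‖_{(Ḣ^s)²} + ‖(ũ,ṽ)‖_{(Ḣ^s)²}). -/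
open MeasureTheory Set

noncomputable section

/-- First component of the high-mode bilinear vector operator `𝐁₂^𝒬`. -/
def vecB2Qfst (N : ℕ) (t : ℝ) (u v : ℤ → ℂ) : ℤ → ℂ := fun k =>
  B2 t (Plow N u) (Qhigh N v) k + B2 t (Qhigh N u) v k -
    B2 t (Plow N u) (Qhigh N u) k - B2 t (Qhigh N u) u k

/-- Second component of the high-mode bilinear vector operator `𝐁₂^𝒬`. -/
def vecB2Qsnd (N : ℕ) (t : ℝ) (u v : ℤ → ℂ) : ℤ → ℂ := fun k =>
  B2 t (Plow N u) (Qhigh N v) k + B2 t (Qhigh N u) v k -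
    B2 t (Plow N v) (Qhigh N v) k - B2 t (Qhigh N v) v k

/-!
Bound `|B₂(φ, ψ)_k|` by the convolution `∑ⱼ aⱼ b_{k-j}` of `aⱼ = |φⱼ|/|j|` and `bⱼ = |ψⱼ|/|j|`.
Every term of `𝐁₂^𝒬` has an argument carrying only modes `|j| > N`, so in each product
`aⱼ b_{k-j}` the larger of the two frequencies is high; as `|k| ≤ 2 max(|j|, |k-j|)`, the weight
`|k|^s` moves onto that high factor, where `|j|^s |φⱼ|/|j| ≤ N⁻¹ |j|^s |φⱼ|`. Young's inequality
`ℓ¹ ⋆ ℓ² → ℓ²` and the Cauchy–Schwarz bound `∑ⱼ |φⱼ|/|j| ≤ (∑ 1/j²)^{1/2} ‖φ‖_{Ḣ⁰}` then give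
`‖B₂(φ, ψ)‖_{Ḣ^s} ≤ C(s) N⁻¹ ‖φ‖_{Ḣ^s} ‖ψ‖_{Ḣ^s}`, and the Lipschitz bound follows by
bilinearity. The squared norms are handled in `ℝ≥0∞`, where every series has a sum.
-/
open scoped ENNReal NNReal

namespace ENNReal

lemma two_mul_mul_le_sq_add_sq (a b : ℝ≥0∞) : 2 * a * b ≤ a ^ 2 + b ^ 2 := by
  rcases eq_or_ne a ⊤ with rfl | ha
  · simp
  rcases eq_or_ne b ⊤ with rfl | hb
  · simp
  lift a to ℝ≥0 using ha
  lift b to ℝ≥0 using hb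
  exact_mod_cast two_mul_le_add_sq a b

lemma add_sq_le_two_mul_add_sq (a b : ℝ≥0∞) : (a + b) ^ 2 ≤ 2 * (a ^ 2 + b ^ 2) := by
  calc (a + b) ^ 2 = a ^ 2 + b ^ 2 + 2 * a * b := by ring
    _ ≤ a ^ 2 + b ^ 2 + (a ^ 2 + b ^ 2) := by gcongr; exact two_mul_mul_le_sq_add_sq a b
    _ = 2 * (a ^ 2 + b ^ 2) := by ring

variable {ι : Type*}

lemma tsum_mul_tsum_eq_tsum_tsum (f g : ι → ℝ≥0∞) :
    (∑' i, f i) * ∑' j, g j = ∑' i, ∑' j, f i * g j := by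
  rw [← ENNReal.tsum_mul_right]
  exact tsum_congr fun i => ENNReal.tsum_mul_left.symm

lemma sq_tsum_mul_le (f g : ι → ℝ≥0∞) :
    (∑' i, f i * g i) ^ 2 ≤ (∑' i, f i) * ∑' i, f i * g i ^ 2 := by
  have key : 2 * (∑' i, f i * g i) ^ 2 ≤ 2 * ((∑' i, f i) * ∑' i, f i * g i ^ 2) :=
    calc 2 * (∑' i, f i * g i) ^ 2 = ∑' i, ∑' j, f i * f j * (2 * g i * g j) := by
          rw [sq, tsum_mul_tsum_eq_tsum_tsum, ← ENNReal.tsum_mul_left]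
          refine tsum_congr fun i => ?_
          rw [← ENNReal.tsum_mul_left]
          exact tsum_congr fun j => by ring
      _ ≤ ∑' i, ∑' j, f i * f j * (g i ^ 2 + g j ^ 2) := by
          gcongr with i j
          exact two_mul_mul_le_sq_add_sq _ _
      _ = ∑' i, ∑' j, f j * (f i * g i ^ 2) + ∑' i, ∑' j, f i * (f j * g j ^ 2) := by
          rw [← ENNReal.tsum_add]
          refine tsum_congr fun i => ?_
          rw [← ENNReal.tsum_add]
          exact tsum_congr fun j => by ring
      _ = 2 * ((∑' i, f i) * ∑' i, f i * g i ^ 2) := by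
          rw [ENNReal.tsum_comm (f := fun i j => f j * (f i * g i ^ 2)),
            ← tsum_mul_tsum_eq_tsum_tsum]
          ring
  exact (ENNReal.mul_le_mul_iff_right two_ne_zero ofNat_ne_top).mp key

lemma tsum_sq_conv_le (f g : ℤ → ℝ≥0∞) :
    ∑' k, (∑' j, f j * g (k - j)) ^ 2 ≤ (∑' j, f j) ^ 2 * ∑' j, g j ^ 2 :=
  calc ∑' k, (∑' j, f j * g (k - j)) ^ 2
      ≤ ∑' k, (∑' j, f j) * ∑' j, f j * g (k - j) ^ 2 :=
        ENNReal.tsum_le_tsum fun k => sq_tsum_mul_le _ _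
    _ = (∑' j, f j) * ∑' j, f j * ∑' k, g (k - j) ^ 2 := by
        rw [ENNReal.tsum_mul_left, ENNReal.tsum_comm]
        exact congrArg _ (tsum_congr fun j => ENNReal.tsum_mul_left)
    _ = (∑' j, f j) ^ 2 * ∑' j, g j ^ 2 := by
        have shift (j : ℤ) : ∑' k, g (k - j) ^ 2 = ∑' k, g k ^ 2 :=
          (Equiv.subRight j).tsum_eq fun k => g k ^ 2
        simp_rw [shift, ENNReal.tsum_mul_right]
        ring

lemma tsum_conv_comm (f g : ℤ → ℝ≥0∞) (k : ℤ) :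
    ∑' j, f j * g (k - j) = ∑' j, g j * f (k - j) := by
  rw [← (Equiv.subLeft k).tsum_eq]
  simp [mul_comm]

end ENNReal

/-- The weight `|k|^s`, set to `0` at the excluded mode `k = 0`. -/
def sobWeight (s : ℝ) (k : ℤ) : ℝ≥0∞ := if k = 0 then 0 else ENNReal.ofReal (((|k| : ℤ) : ℝ) ^ s)

def sobEnergy (s : ℝ) (u : ℤ → ℂ) : ℝ≥0∞ := ∑' k, (sobWeight s k * ‖u k‖ₑ) ^ 2

section Weight

variable {s : ℝ} {j k : ℤ}

lemma sobWeight_sq (hk : k ≠ 0) : sobWeight s k ^ 2 = ENNReal.ofReal (wt s k) := by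
  rw [sobWeight, if_neg hk, ← ENNReal.ofReal_pow (by positivity), wt, mul_comm,
    Real.rpow_mul (by positivity), Real.rpow_two]

lemma one_le_sobWeight (hs : 0 ≤ s) (hk : k ≠ 0) : 1 ≤ sobWeight s k := by
  rw [sobWeight, if_neg hk, ENNReal.one_le_ofReal]
  exact Real.one_le_rpow (by exact_mod_cast Int.one_le_abs hk) hs

lemma sobWeight_le_of_abs_le (hs : 0 ≤ s) (h : |k| ≤ 2 * |j|) :
    sobWeight s k ≤ 2 ^ s * sobWeight s j := by
  rcases eq_or_ne k 0 with rfl | hk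
  · simp [sobWeight]
  have hj : j ≠ 0 := by rintro rfl; simp_all
  rw [sobWeight, sobWeight, if_neg hk, if_neg hj, ← ENNReal.ofReal_ofNat 2,
    ENNReal.ofReal_rpow_of_nonneg zero_le_two hs, ← ENNReal.ofReal_mul (by positivity),
    ← Real.mul_rpow zero_le_two (by positivity)]
  gcongr
  exact_mod_cast h

end Weight

section Energy

variable {s : ℝ}

lemma sobEnergy_eq_tsum_ofReal (u : ℤ → ℂ) :
    sobEnergy s u = ∑' k : {k : ℤ // k ≠ 0}, ENNReal.ofReal (wt s k.1 * ‖u k.1‖ ^ 2) := by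
  rw [sobEnergy, ← tsum_subtype_eq_of_support_subset (s := {k : ℤ | k ≠ 0})]
  · refine tsum_congr fun k => ?_
    rw [ENNReal.ofReal_mul (by unfold wt; positivity), ← sobWeight_sq k.2,
      ENNReal.ofReal_pow (norm_nonneg _), ofReal_norm, mul_pow]
  · intro k hk
    rintro rfl
    simp [sobWeight] at hk

lemma memH_iff_sobEnergy_ne_top {u : ℤ → ℂ} : memH s u ↔ sobEnergy s u ≠ ⊤ := by
  rw [sobEnergy_eq_tsum_ofReal, memH]
  refine ⟨Summable.tsum_ofReal_ne_top, fun h => (ENNReal.summable_toReal h).congr fun k => ?_⟩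
  exact ENNReal.toReal_ofReal (by unfold wt; positivity)

lemma hnorm_sq_eq (u : ℤ → ℂ) : hnorm s u ^ 2 = (sobEnergy s u).toReal := by
  rw [hnorm, Real.sq_sqrt (tsum_nonneg fun k => by unfold wt; positivity), sobEnergy_eq_tsum_ofReal,
    ENNReal.tsum_toReal_eq fun _ => ENNReal.ofReal_ne_top]
  exact tsum_congr fun k => (ENNReal.toReal_ofReal (by unfold wt; positivity)).symm

lemma hnorm2_eq {u v : ℤ → ℂ} (hu : sobEnergy s u ≠ ⊤) (hv : sobEnergy s v ≠ ⊤) :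
    hnorm2 s u v = √(sobEnergy s u + sobEnergy s v).toReal := by
  rw [hnorm2, hnorm_sq_eq, hnorm_sq_eq, ENNReal.toReal_add hu hv]

lemma sobEnergy_mono {u v : ℤ → ℂ} (h : ∀ k, ‖u k‖ₑ ≤ ‖v k‖ₑ) : sobEnergy s u ≤ sobEnergy s v :=
  ENNReal.tsum_le_tsum fun k => by gcongr; exact h k

lemma sobEnergy_add_le (u v : ℤ → ℂ) :
    sobEnergy s (u + v) ≤ 2 * (sobEnergy s u + sobEnergy s v) := by
  rw [sobEnergy, sobEnergy, sobEnergy, ← ENNReal.tsum_add, ← ENNReal.tsum_mul_left]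
  refine ENNReal.tsum_le_tsum fun k => ?_
  calc (sobWeight s k * ‖u k + v k‖ₑ) ^ 2
      ≤ (sobWeight s k * ‖u k‖ₑ + sobWeight s k * ‖v k‖ₑ) ^ 2 := by
        rw [← mul_add]; gcongr; exact enorm_add_le _ _
    _ ≤ _ := ENNReal.add_sq_le_two_mul_add_sq _ _

lemma sobEnergy_neg (u : ℤ → ℂ) : sobEnergy s (-u) = sobEnergy s u := by
  simp [sobEnergy]

lemma sobEnergy_sub_le (u v : ℤ → ℂ) :
    sobEnergy s (u - v) ≤ 2 * (sobEnergy s u + sobEnergy s v) := by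
  simpa [sub_eq_add_neg, sobEnergy_neg] using sobEnergy_add_le (s := s) u (-v)

lemma sobEnergy_sub_ne_top {u v : ℤ → ℂ} (hu : sobEnergy s u ≠ ⊤) (hv : sobEnergy s v ≠ ⊤) :
    sobEnergy s (u - v) ≠ ⊤ :=
  ne_top_of_le_ne_top (by finiteness) (sobEnergy_sub_le u v)

lemma sobEnergy_Plow_le (N : ℕ) (u : ℤ → ℂ) : sobEnergy s (Plow N u) ≤ sobEnergy s u :=
  sobEnergy_mono fun k => by unfold Plow; split_ifs <;> simp

lemma sobEnergy_Qhigh_le (N : ℕ) (u : ℤ → ℂ) : sobEnergy s (Qhigh N u) ≤ sobEnergy s u :=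
  sobEnergy_mono fun k => by unfold Qhigh; split_ifs <;> simp

end Energy

/-- The term `j = 0` vanishes because `(0 : ℂ)⁻¹ = 0`. -/
def sumInvSq : ℝ≥0∞ := ∑' j : ℤ, ‖(j : ℂ)⁻¹‖ₑ ^ 2

lemma sumInvSq_ne_top : sumInvSq ≠ ⊤ := by
  have h (j : ℤ) : ‖(j : ℂ)⁻¹‖ₑ ^ 2 = ENNReal.ofReal (1 / (j : ℝ) ^ 2) := by
    rw [← ofReal_norm, ← ENNReal.ofReal_pow (norm_nonneg _), norm_inv, Complex.norm_intCast,
      inv_pow, sq_abs, one_div]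
  simp_rw [sumInvSq, h]
  exact (Real.summable_one_div_int_pow.mpr one_lt_two).tsum_ofReal_ne_top

lemma sq_tsum_enorm_div_le {s : ℝ} (hs : 0 ≤ s) (φ : ℤ → ℂ) :
    (∑' j, ‖φ j / j‖ₑ) ^ 2 ≤ sumInvSq * sobEnergy s φ := by
  have split (j : ℤ) : ‖φ j / j‖ₑ = ‖(j : ℂ)⁻¹‖ₑ ^ 2 * (‖(j : ℂ)‖ₑ * ‖φ j‖ₑ) := by
    rw [← enorm_pow, ← enorm_mul, ← enorm_mul]
    rcases eq_or_ne (j : ℂ) 0 with hj | hj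
    · simp [hj]
    · congr 1; field_simp
  simp_rw [split]
  refine (ENNReal.sq_tsum_mul_le _ _).trans (mul_le_mul_right (ENNReal.tsum_le_tsum fun j => ?_) _)
  rcases eq_or_ne j 0 with rfl | hj
  · simp
  calc ‖(j : ℂ)⁻¹‖ₑ ^ 2 * (‖(j : ℂ)‖ₑ * ‖φ j‖ₑ) ^ 2 = ‖φ j‖ₑ ^ 2 := by
        rw [enorm_inv (by exact_mod_cast hj), mul_pow, ← mul_assoc, ← mul_pow,
          ENNReal.inv_mul_cancel (by simpa using hj) enorm_ne_top, one_pow, one_mul]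
    _ ≤ (sobWeight s j * ‖φ j‖ₑ) ^ 2 := by
        gcongr; exact le_mul_of_one_le_left' (one_le_sobWeight hs hj)

def highWeight (s : ℝ) (N : ℕ) (j : ℤ) : ℝ≥0∞ := if (N : ℤ) < |j| then sobWeight s j else 0

/-- This is where the factor `1/N` comes from. -/
lemma tsum_sq_highWeight_mul_le (s : ℝ) (N : ℕ) (φ : ℤ → ℂ) :
    ∑' j, (highWeight s N j * ‖φ j / j‖ₑ) ^ 2 ≤ (N : ℝ≥0∞)⁻¹ ^ 2 * sobEnergy s φ := by
  rw [sobEnergy, ← ENNReal.tsum_mul_left]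
  refine ENNReal.tsum_le_tsum fun j => ?_
  unfold highWeight
  split_ifs with hj
  · have hj0 : (j : ℂ) ≠ 0 := by exact_mod_cast (abs_pos.mp (by omega) : j ≠ 0)
    have hN : (N : ℝ≥0∞) ≤ ‖(j : ℂ)‖ₑ := by
      rw [← ofReal_norm, Complex.norm_intCast, ← ENNReal.ofReal_natCast]
      exact ENNReal.ofReal_le_ofReal (by exact_mod_cast hj.le)
    calc (sobWeight s j * ‖φ j / j‖ₑ) ^ 2 = (‖(j : ℂ)‖ₑ⁻¹ * (sobWeight s j * ‖φ j‖ₑ)) ^ 2 := by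
          rw [div_eq_mul_inv, enorm_mul, enorm_inv hj0]; ring
      _ ≤ _ := by rw [mul_pow]; gcongr
  · simp

section Convolution

variable {s : ℝ} {N : ℕ} {a b : ℤ → ℝ≥0∞}

/-- Since `|k| ≤ 2 max(|j|, |k - j|)` and the larger of the two frequencies is high, the weight
`|k|^s` can be moved onto a high-frequency factor. -/
lemma sobWeight_mul_tsum_conv_le (hs : 0 ≤ s)
    (hab : ∀ j m, a j * b m ≠ 0 → (N : ℤ) < |j| ∨ (N : ℤ) < |m|) (k : ℤ) :
    sobWeight s k * ∑' j, a j * b (k - j) ≤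
      2 ^ s * ∑' j, (highWeight s N j * a j * b (k - j) +
        a j * (highWeight s N (k - j) * b (k - j))) := by
  rw [← ENNReal.tsum_mul_left, ← ENNReal.tsum_mul_left]
  refine ENNReal.tsum_le_tsum fun j => ?_
  by_cases h0 : a j * b (k - j) = 0
  · simp [h0]
  have htri : |k| ≤ |j| + |k - j| := by simpa using abs_add_le j (k - j)
  rcases le_total |k - j| |j| with hle | hle
  · have hj : (N : ℤ) < |j| := (hab j _ h0).elim id (fun h => h.trans_le hle)
    calc sobWeight s k * (a j * b (k - j)) ≤ 2 ^ s * sobWeight s j * (a j * b (k - j)) := by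
          gcongr; exact sobWeight_le_of_abs_le hs (by omega)
      _ = 2 ^ s * (highWeight s N j * a j * b (k - j)) := by rw [highWeight, if_pos hj]; ring
      _ ≤ _ := by gcongr; exact le_self_add
  · have hm : (N : ℤ) < |k - j| := (hab j _ h0).elim (fun h => h.trans_le hle) id
    calc sobWeight s k * (a j * b (k - j)) ≤ 2 ^ s * sobWeight s (k - j) * (a j * b (k - j)) := by
          gcongr; exact sobWeight_le_of_abs_le hs (by omega)
      _ = 2 ^ s * (a j * (highWeight s N (k - j) * b (k - j))) := by
          rw [highWeight, if_pos hm]; ring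
      _ ≤ _ := by gcongr; exact le_add_self

lemma tsum_sq_sobWeight_mul_conv_le (hs : 0 ≤ s)
    (hab : ∀ j m, a j * b m ≠ 0 → (N : ℤ) < |j| ∨ (N : ℤ) < |m|) :
    ∑' k, (sobWeight s k * ∑' j, a j * b (k - j)) ^ 2 ≤
      (2 ^ s) ^ 2 * 2 * ((∑' j, b j) ^ 2 * ∑' j, (highWeight s N j * a j) ^ 2 +
        (∑' j, a j) ^ 2 * ∑' j, (highWeight s N j * b j) ^ 2) := by
  set A := fun j => highWeight s N j * a j
  set B := fun j => highWeight s N j * b j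
  have hpt (k : ℤ) : (sobWeight s k * ∑' j, a j * b (k - j)) ^ 2 ≤
      (2 ^ s) ^ 2 * 2 * ((∑' j, b j * A (k - j)) ^ 2 + (∑' j, a j * B (k - j)) ^ 2) := by
    calc (sobWeight s k * ∑' j, a j * b (k - j)) ^ 2
        ≤ (2 ^ s * ((∑' j, A j * b (k - j)) + ∑' j, a j * B (k - j))) ^ 2 := by
          rw [← ENNReal.tsum_add]
          gcongr ?_ ^ 2
          exact sobWeight_mul_tsum_conv_le hs hab k
      _ ≤ (2 ^ s) ^ 2 * (2 * ((∑' j, A j * b (k - j)) ^ 2 + (∑' j, a j * B (k - j)) ^ 2)) := by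
          rw [mul_pow]; gcongr; exact ENNReal.add_sq_le_two_mul_add_sq _ _
      _ = _ := by
          rw [ENNReal.tsum_conv_comm A]; ring
  calc ∑' k, (sobWeight s k * ∑' j, a j * b (k - j)) ^ 2
      ≤ ∑' k, (2 ^ s) ^ 2 * 2 * ((∑' j, b j * A (k - j)) ^ 2 + (∑' j, a j * B (k - j)) ^ 2) :=
        ENNReal.tsum_le_tsum hpt
    _ = (2 ^ s) ^ 2 * 2 * (∑' k, (∑' j, b j * A (k - j)) ^ 2 +
          ∑' k, (∑' j, a j * B (k - j)) ^ 2) := by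
        rw [ENNReal.tsum_mul_left, ENNReal.tsum_add]
    _ ≤ _ := by gcongr <;> exact ENNReal.tsum_sq_conv_le _ _

end Convolution

section B2

variable {s : ℝ} {N : ℕ} {t : ℝ} {φ φ' ψ ψ' : ℤ → ℂ}

def B2term (t : ℝ) (φ ψ : ℤ → ℂ) (k j : ℤ) : ℂ :=
  if j ≠ 0 ∧ k - j ≠ 0 then osc2 t k j * φ j * ψ (k - j) / ((j : ℂ) * ((k - j : ℤ) : ℂ)) else 0

lemma B2_apply (t : ℝ) (φ ψ : ℤ → ℂ) (k : ℤ) : B2 t φ ψ k = 1 / 6 * ∑' j, B2term t φ ψ k j :=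
  rfl

lemma enorm_osc2 (t : ℝ) (k j : ℤ) : ‖osc2 t k j‖ₑ = 1 := by
  rw [osc2, ← ofReal_norm, Complex.norm_exp]
  simp

lemma enorm_B2term_le (t : ℝ) (φ ψ : ℤ → ℂ) (k j : ℤ) :
    ‖B2term t φ ψ k j‖ₑ ≤ ‖φ j / j‖ₑ * ‖ψ (k - j) / ((k - j : ℤ) : ℂ)‖ₑ := by
  unfold B2term
  split_ifs
  · rw [mul_assoc, mul_div_assoc, mul_div_mul_comm, enorm_mul, enorm_mul, enorm_osc2, one_mul]
  · simp

/-- Division by `0` gives `0`, so the excluded modes `j = 0`, `k - j = 0` contribute nothing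
on the right. -/
lemma enorm_B2_le (t : ℝ) (φ ψ : ℤ → ℂ) (k : ℤ) :
    ‖B2 t φ ψ k‖ₑ ≤ ∑' j, ‖φ j / j‖ₑ * ‖ψ (k - j) / ((k - j : ℤ) : ℂ)‖ₑ := by
  rw [B2_apply, enorm_mul]
  calc ‖(1 / 6 : ℂ)‖ₑ * ‖∑' j, B2term t φ ψ k j‖ₑ ≤ 1 * ∑' j, ‖B2term t φ ψ k j‖ₑ := by
        gcongr
        · rw [← ofReal_norm, ENNReal.ofReal_le_one]; norm_num
        · exact enorm_tsum_le_tsum_enorm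
    _ ≤ _ := by rw [one_mul]; exact ENNReal.tsum_le_tsum (enorm_B2term_le t φ ψ k)

lemma tsum_enorm_div_ne_top (hs : 0 ≤ s) (hφ : sobEnergy s φ ≠ ⊤) : ∑' j, ‖φ j / j‖ₑ ≠ ⊤ := by
  have h := (sq_tsum_enorm_div_le hs φ).trans_lt
    (ENNReal.mul_lt_top sumInvSq_ne_top.lt_top hφ.lt_top)
  exact fun htop => by simp [htop] at h

lemma summable_B2term (hs : 0 ≤ s) (hφ : sobEnergy s φ ≠ ⊤) (hψ : sobEnergy s ψ ≠ ⊤)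
    (t : ℝ) (k : ℤ) : Summable (B2term t φ ψ k) := by
  refine Summable.of_norm (tsum_enorm_ne_top_iff_summable_norm.mp (ne_top_of_le_ne_top ?_
    (ENNReal.tsum_le_tsum (enorm_B2term_le t φ ψ k))))
  refine ne_top_of_le_ne_top (ENNReal.mul_ne_top (tsum_enorm_div_ne_top hs hφ)
    (tsum_enorm_div_ne_top hs hψ)) ?_
  rw [← ENNReal.tsum_mul_right]
  exact ENNReal.tsum_le_tsum fun j => by gcongr; exact ENNReal.le_tsum (k - j)

lemma B2_sub_left (hs : 0 ≤ s) (hφ : sobEnergy s φ ≠ ⊤) (hφ' : sobEnergy s φ' ≠ ⊤)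
    (hψ : sobEnergy s ψ ≠ ⊤) : B2 t (φ - φ') ψ = B2 t φ ψ - B2 t φ' ψ := by
  ext k
  rw [Pi.sub_apply, B2_apply, B2_apply, B2_apply, ← mul_sub,
    ← (summable_B2term hs hφ hψ t k).tsum_sub (summable_B2term hs hφ' hψ t k)]
  congr 1
  exact tsum_congr fun j => by simp only [B2term, Pi.sub_apply]; split_ifs <;> ring

lemma B2_sub_right (hs : 0 ≤ s) (hφ : sobEnergy s φ ≠ ⊤) (hψ : sobEnergy s ψ ≠ ⊤)
    (hψ' : sobEnergy s ψ' ≠ ⊤) : B2 t φ (ψ - ψ') = B2 t φ ψ - B2 t φ ψ' := by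
  ext k
  rw [Pi.sub_apply, B2_apply, B2_apply, B2_apply, ← mul_sub,
    ← (summable_B2term hs hφ hψ t k).tsum_sub (summable_B2term hs hφ hψ' t k)]
  congr 1
  exact tsum_congr fun j => by simp only [B2term, Pi.sub_apply]; split_ifs <;> ring

lemma B2_sub_B2 (hs : 0 ≤ s) (hφ : sobEnergy s φ ≠ ⊤) (hφ' : sobEnergy s φ' ≠ ⊤)
    (hψ : sobEnergy s ψ ≠ ⊤) (hψ' : sobEnergy s ψ' ≠ ⊤) :
    B2 t φ ψ - B2 t φ' ψ' = B2 t (φ - φ') ψ + B2 t φ' (ψ - ψ') := by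
  rw [B2_sub_left hs hφ hφ' hψ, B2_sub_right hs hφ' hψ hψ']
  abel

def IsHighFreq (N : ℕ) (φ : ℤ → ℂ) : Prop := ∀ j, |j| ≤ (N : ℤ) → φ j = 0

def squeezeConst (s : ℝ) : ℝ≥0∞ := 4 * (2 ^ s) ^ 2 * sumInvSq

lemma squeezeConst_ne_top (s : ℝ) : squeezeConst s ≠ ⊤ := by
  have := sumInvSq_ne_top
  unfold squeezeConst
  finiteness

theorem sobEnergy_B2_le (hs : 0 ≤ s) (t : ℝ) (h : IsHighFreq N φ ∨ IsHighFreq N ψ) :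
    sobEnergy s (B2 t φ ψ) ≤
      squeezeConst s * (N : ℝ≥0∞)⁻¹ ^ 2 * (sobEnergy s φ * sobEnergy s ψ) := by
  set a : ℤ → ℝ≥0∞ := fun j => ‖φ j / j‖ₑ
  set b : ℤ → ℝ≥0∞ := fun j => ‖ψ j / j‖ₑ
  have hab (j m : ℤ) (h0 : a j * b m ≠ 0) : (N : ℤ) < |j| ∨ (N : ℤ) < |m| := by
    by_contra! hlow
    rcases h with hφ | hψ
    · exact h0 (by simp [a, hφ j hlow.1])
    · exact h0 (by simp [b, hψ m hlow.2])
  calc sobEnergy s (B2 t φ ψ) ≤ ∑' k, (sobWeight s k * ∑' j, a j * b (k - j)) ^ 2 :=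
        ENNReal.tsum_le_tsum fun k => by gcongr; exact enorm_B2_le t φ ψ k
    _ ≤ (2 ^ s) ^ 2 * 2 * ((∑' j, b j) ^ 2 * ∑' j, (highWeight s N j * a j) ^ 2 +
          (∑' j, a j) ^ 2 * ∑' j, (highWeight s N j * b j) ^ 2) :=
        tsum_sq_sobWeight_mul_conv_le hs hab
    _ ≤ (2 ^ s) ^ 2 * 2 * (sumInvSq * sobEnergy s ψ * ((N : ℝ≥0∞)⁻¹ ^ 2 * sobEnergy s φ) +
          sumInvSq * sobEnergy s φ * ((N : ℝ≥0∞)⁻¹ ^ 2 * sobEnergy s ψ)) := by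
        gcongr
        · exact sq_tsum_enorm_div_le hs ψ
        · exact tsum_sq_highWeight_mul_le s N φ
        · exact sq_tsum_enorm_div_le hs φ
        · exact tsum_sq_highWeight_mul_le s N ψ
    _ = _ := by unfold squeezeConst; ring

end B2

section B2Q

variable {s : ℝ} {N : ℕ} {t : ℝ} {φ φ' ψ ψ' : ℤ → ℂ}

lemma isHighFreq_Qhigh (N : ℕ) (φ : ℤ → ℂ) : IsHighFreq N (Qhigh N φ) :=
  fun _ hj => if_pos hj

lemma Plow_sub (N : ℕ) (φ φ' : ℤ → ℂ) : Plow N (φ - φ') = Plow N φ - Plow N φ' := by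
  ext k; by_cases h : |k| ≤ (N : ℤ) <;> simp [Plow, h]

lemma Qhigh_sub (N : ℕ) (φ φ' : ℤ → ℂ) : Qhigh N (φ - φ') = Qhigh N φ - Qhigh N φ' := by
  ext k; by_cases h : |k| ≤ (N : ℤ) <;> simp [Qhigh, h]

/-- The high-mode part `B₂(φ, ψ) - B₂(𝒫φ, 𝒫ψ)` of `B₂`. -/
def B2Q (N : ℕ) (t : ℝ) (φ ψ : ℤ → ℂ) : ℤ → ℂ :=
  B2 t (Plow N φ) (Qhigh N ψ) + B2 t (Qhigh N φ) ψ

lemma vecB2Qfst_eq (N : ℕ) (t : ℝ) (u v : ℤ → ℂ) :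
    vecB2Qfst N t u v = B2Q N t u v - B2Q N t u u := by
  ext k; simp only [vecB2Qfst, B2Q, Pi.add_apply, Pi.sub_apply]; ring

lemma vecB2Qsnd_eq (N : ℕ) (t : ℝ) (u v : ℤ → ℂ) :
    vecB2Qsnd N t u v = B2Q N t u v - B2Q N t v v := by
  ext k; simp only [vecB2Qsnd, B2Q, Pi.add_apply, Pi.sub_apply]; ring

lemma sobEnergy_B2Q_le (hs : 0 ≤ s) (N : ℕ) (t : ℝ) (φ ψ : ℤ → ℂ) :
    sobEnergy s (B2Q N t φ ψ) ≤
      4 * squeezeConst s * (N : ℝ≥0∞)⁻¹ ^ 2 * (sobEnergy s φ * sobEnergy s ψ) := by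
  have hPQ := sobEnergy_B2_le hs t (Or.inr (isHighFreq_Qhigh N ψ)) (φ := Plow N φ)
  have hQ := sobEnergy_B2_le hs t (Or.inl (isHighFreq_Qhigh N φ)) (ψ := ψ)
  calc sobEnergy s (B2Q N t φ ψ)
      ≤ 2 * (sobEnergy s (B2 t (Plow N φ) (Qhigh N ψ)) + sobEnergy s (B2 t (Qhigh N φ) ψ)) :=
        sobEnergy_add_le _ _
    _ ≤ 2 * (squeezeConst s * (N : ℝ≥0∞)⁻¹ ^ 2 * (sobEnergy s φ * sobEnergy s ψ) +
          squeezeConst s * (N : ℝ≥0∞)⁻¹ ^ 2 * (sobEnergy s φ * sobEnergy s ψ)) := by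
        gcongr
        · exact hPQ.trans (by gcongr; exacts [sobEnergy_Plow_le N φ, sobEnergy_Qhigh_le N ψ])
        · exact hQ.trans (by gcongr; exact sobEnergy_Qhigh_le N φ)
    _ = _ := by ring

lemma B2Q_sub_B2Q (hs : 0 ≤ s) (hφ : sobEnergy s φ ≠ ⊤) (hφ' : sobEnergy s φ' ≠ ⊤)
    (hψ : sobEnergy s ψ ≠ ⊤) (hψ' : sobEnergy s ψ' ≠ ⊤) :
    B2Q N t φ ψ - B2Q N t φ' ψ' = B2Q N t (φ - φ') ψ + B2Q N t φ' (ψ - ψ') := by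
  have hP := B2_sub_B2 (t := t) hs ((sobEnergy_Plow_le N φ).trans_lt hφ.lt_top).ne
    ((sobEnergy_Plow_le N φ').trans_lt hφ'.lt_top).ne
    ((sobEnergy_Qhigh_le N ψ).trans_lt hψ.lt_top).ne
    ((sobEnergy_Qhigh_le N ψ').trans_lt hψ'.lt_top).ne
  have hQ := B2_sub_B2 (t := t) hs ((sobEnergy_Qhigh_le N φ).trans_lt hφ.lt_top).ne
    ((sobEnergy_Qhigh_le N φ').trans_lt hφ'.lt_top).ne hψ hψ'
  simp only [B2Q, Plow_sub, Qhigh_sub]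
  linear_combination hP + hQ

lemma sobEnergy_B2Q_sub_le (hs : 0 ≤ s) (hφ : sobEnergy s φ ≠ ⊤) (hφ' : sobEnergy s φ' ≠ ⊤)
    (hψ : sobEnergy s ψ ≠ ⊤) (hψ' : sobEnergy s ψ' ≠ ⊤) :
    sobEnergy s (B2Q N t φ ψ - B2Q N t φ' ψ') ≤ 8 * squeezeConst s * (N : ℝ≥0∞)⁻¹ ^ 2 *
      (sobEnergy s (φ - φ') * sobEnergy s ψ + sobEnergy s φ' * sobEnergy s (ψ - ψ')) := by
  rw [B2Q_sub_B2Q hs hφ hφ' hψ hψ']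
  refine (sobEnergy_add_le _ _).trans ?_
  calc 2 * (sobEnergy s (B2Q N t (φ - φ') ψ) + sobEnergy s (B2Q N t φ' (ψ - ψ')))
      ≤ 2 * (4 * squeezeConst s * (N : ℝ≥0∞)⁻¹ ^ 2 * (sobEnergy s (φ - φ') * sobEnergy s ψ) +
          4 * squeezeConst s * (N : ℝ≥0∞)⁻¹ ^ 2 * (sobEnergy s φ' * sobEnergy s (ψ - ψ'))) := by
        gcongr <;> exact sobEnergy_B2Q_le hs N t _ _
    _ = _ := by ring

end B2Q

section VecB2Q

variable {s : ℝ} {u v u' v' : ℤ → ℂ}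

lemma sobEnergy_vecB2Q_le (hs : 0 ≤ s) (N : ℕ) (t : ℝ) (u v : ℤ → ℂ) :
    sobEnergy s (vecB2Qfst N t u v) + sobEnergy s (vecB2Qsnd N t u v) ≤
      32 * squeezeConst s * (N : ℝ≥0∞)⁻¹ ^ 2 * (sobEnergy s u + sobEnergy s v) ^ 2 := by
  set S := sobEnergy s u + sobEnergy s v
  have hcomp (x : ℤ → ℂ) (hx : sobEnergy s x ≤ S) :
      sobEnergy s (B2Q N t u v - B2Q N t x x) ≤
        16 * squeezeConst s * (N : ℝ≥0∞)⁻¹ ^ 2 * S ^ 2 :=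
    calc sobEnergy s (B2Q N t u v - B2Q N t x x)
        ≤ 2 * (sobEnergy s (B2Q N t u v) + sobEnergy s (B2Q N t x x)) := sobEnergy_sub_le _ _
      _ ≤ 2 * (4 * squeezeConst s * (N : ℝ≥0∞)⁻¹ ^ 2 * (S * S) +
            4 * squeezeConst s * (N : ℝ≥0∞)⁻¹ ^ 2 * (S * S)) := by
          gcongr
          · exact (sobEnergy_B2Q_le hs N t u v).trans (by gcongr; exacts [le_self_add, le_add_self])
          · exact (sobEnergy_B2Q_le hs N t x x).trans (by gcongr)
      _ = _ := by ring
  rw [vecB2Qfst_eq, vecB2Qsnd_eq]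
  calc _ ≤ 16 * squeezeConst s * (N : ℝ≥0∞)⁻¹ ^ 2 * S ^ 2 +
        16 * squeezeConst s * (N : ℝ≥0∞)⁻¹ ^ 2 * S ^ 2 :=
        add_le_add (hcomp u le_self_add) (hcomp v le_add_self)
    _ = _ := by ring

lemma sobEnergy_vecB2Q_sub_le (hs : 0 ≤ s) (N : ℕ) (t : ℝ) (hu : sobEnergy s u ≠ ⊤)
    (hv : sobEnergy s v ≠ ⊤) (hu' : sobEnergy s u' ≠ ⊤) (hv' : sobEnergy s v' ≠ ⊤) :
    sobEnergy s (vecB2Qfst N t u v - vecB2Qfst N t u' v') +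
        sobEnergy s (vecB2Qsnd N t u v - vecB2Qsnd N t u' v') ≤
      128 * squeezeConst s * (N : ℝ≥0∞)⁻¹ ^ 2 *
        ((sobEnergy s (u - u') + sobEnergy s (v - v')) *
          (sobEnergy s u + sobEnergy s v + (sobEnergy s u' + sobEnergy s v'))) := by
  set D := sobEnergy s (u - u') + sobEnergy s (v - v')
  set O := sobEnergy s u + sobEnergy s v + (sobEnergy s u' + sobEnergy s v')
  have hcomp (x x' : ℤ → ℂ) (hx : sobEnergy s x ≠ ⊤) (hx' : sobEnergy s x' ≠ ⊤)
      (hxD : sobEnergy s (x - x') ≤ D) (hxO : sobEnergy s x ≤ O) (hx'O : sobEnergy s x' ≤ O) :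
      sobEnergy s ((B2Q N t u v - B2Q N t x x) - (B2Q N t u' v' - B2Q N t x' x')) ≤
        64 * squeezeConst s * (N : ℝ≥0∞)⁻¹ ^ 2 * (D * O) :=
    calc _ = sobEnergy s ((B2Q N t u v - B2Q N t u' v') - (B2Q N t x x - B2Q N t x' x')) := by
          rw [sub_sub_sub_comm]
      _ ≤ 2 * (sobEnergy s (B2Q N t u v - B2Q N t u' v') +
            sobEnergy s (B2Q N t x x - B2Q N t x' x')) := sobEnergy_sub_le _ _
      _ ≤ 2 * (8 * squeezeConst s * (N : ℝ≥0∞)⁻¹ ^ 2 *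
              (sobEnergy s (u - u') * sobEnergy s v + sobEnergy s u' * sobEnergy s (v - v')) +
            8 * squeezeConst s * (N : ℝ≥0∞)⁻¹ ^ 2 *
              (sobEnergy s (x - x') * sobEnergy s x + sobEnergy s x' * sobEnergy s (x - x'))) := by
          gcongr
          exacts [sobEnergy_B2Q_sub_le hs hu hu' hv hv', sobEnergy_B2Q_sub_le hs hx hx' hx hx']
      _ ≤ 2 * (8 * squeezeConst s * (N : ℝ≥0∞)⁻¹ ^ 2 * (D * O + O * D) +
            8 * squeezeConst s * (N : ℝ≥0∞)⁻¹ ^ 2 * (D * O + O * D)) := by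
          gcongr
          exacts [le_self_add, le_add_self.trans le_self_add, le_self_add.trans le_add_self,
            le_add_self]
      _ = _ := by ring
  rw [vecB2Qfst_eq, vecB2Qfst_eq, vecB2Qsnd_eq, vecB2Qsnd_eq]
  calc _ ≤ 64 * squeezeConst s * (N : ℝ≥0∞)⁻¹ ^ 2 * (D * O) +
        64 * squeezeConst s * (N : ℝ≥0∞)⁻¹ ^ 2 * (D * O) :=
        add_le_add
          (hcomp u u' hu hu' le_self_add (le_self_add.trans le_self_add)
            (le_self_add.trans le_add_self))
          (hcomp v v' hv hv' le_add_self (le_add_self.trans le_self_add)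
            (le_add_self.trans le_add_self))
    _ = _ := by ring

end VecB2Q

lemma sqrt_toReal_le_of_le_mul_inv_sq {X Y c : ℝ≥0∞} {N : ℕ} (hN : 0 < N) (hc : c ≠ ⊤)
    (hY : Y ≠ ⊤) (h : X ≤ c * (N : ℝ≥0∞)⁻¹ ^ 2 * Y) :
    √X.toReal ≤ √c.toReal / N * √Y.toReal := by
  have hN' : (N : ℝ≥0∞)⁻¹ ≠ ⊤ := ENNReal.inv_ne_top.mpr (by exact_mod_cast hN.ne')
  calc √X.toReal ≤ √(c * (N : ℝ≥0∞)⁻¹ ^ 2 * Y).toReal :=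
        Real.sqrt_le_sqrt (ENNReal.toReal_mono (by finiteness) h)
    _ = √c.toReal / N * √Y.toReal := by
        rw [ENNReal.toReal_mul, ENNReal.toReal_mul, ENNReal.toReal_pow, ENNReal.toReal_inv,
          ENNReal.toReal_natCast, Real.sqrt_mul (by positivity), Real.sqrt_mul (by positivity),
          Real.sqrt_sq (by positivity), div_eq_mul_inv]

lemma sqrt_toReal_mul_add_le (D : ℝ≥0∞) {S S' : ℝ≥0∞} (hS : S ≠ ⊤) (hS' : S' ≠ ⊤) :
    √(D * (S + S')).toReal ≤ √D.toReal * (√S.toReal + √S'.toReal) := by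
  rw [ENNReal.toReal_mul, ENNReal.toReal_add hS hS', Real.sqrt_mul ENNReal.toReal_nonneg]
  gcongr
  rw [Real.sqrt_le_left (by positivity)]
  nlinarith [Real.sq_sqrt (ENNReal.toReal_nonneg (a := S)),
    Real.sq_sqrt (ENNReal.toReal_nonneg (a := S')), Real.sqrt_nonneg S.toReal,
    Real.sqrt_nonneg S'.toReal]

section Norms

variable {s : ℝ} {N : ℕ} {u v u' v' : ℤ → ℂ}

lemma sobEnergy_vecB2Q_ne_top (hs : 0 ≤ s) (hN : 0 < N) (t : ℝ) (hu : sobEnergy s u ≠ ⊤)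
    (hv : sobEnergy s v ≠ ⊤) :
    sobEnergy s (vecB2Qfst N t u v) ≠ ⊤ ∧ sobEnergy s (vecB2Qsnd N t u v) ≠ ⊤ := by
  have := squeezeConst_ne_top s
  have hN' : (N : ℝ≥0∞)⁻¹ ≠ ⊤ := ENNReal.inv_ne_top.mpr (by exact_mod_cast hN.ne')
  exact ENNReal.add_ne_top.mp
    (ne_top_of_le_ne_top (by finiteness) (sobEnergy_vecB2Q_le hs N t u v))

lemma hnorm2_vecB2Q_le (hs : 0 ≤ s) (hN : 0 < N) (t : ℝ) (hu : sobEnergy s u ≠ ⊤)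
    (hv : sobEnergy s v ≠ ⊤) :
    hnorm2 s (vecB2Qfst N t u v) (vecB2Qsnd N t u v) ≤
      √(128 * squeezeConst s).toReal / N * hnorm2 s u v ^ 2 := by
  have := squeezeConst_ne_top s
  have hF := sobEnergy_vecB2Q_ne_top hs hN t hu hv
  have hbound : sobEnergy s (vecB2Qfst N t u v) + sobEnergy s (vecB2Qsnd N t u v) ≤
      128 * squeezeConst s * (N : ℝ≥0∞)⁻¹ ^ 2 * (sobEnergy s u + sobEnergy s v) ^ 2 :=
    (sobEnergy_vecB2Q_le hs N t u v).trans (by gcongr; norm_num)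
  rw [hnorm2_eq hF.1 hF.2, hnorm2_eq hu hv, Real.sq_sqrt ENNReal.toReal_nonneg]
  refine (sqrt_toReal_le_of_le_mul_inv_sq hN (by finiteness) (by finiteness) hbound).trans_eq
    ?_
  rw [ENNReal.toReal_pow, Real.sqrt_sq ENNReal.toReal_nonneg]

lemma hnorm2_vecB2Q_sub_le (hs : 0 ≤ s) (hN : 0 < N) (t : ℝ) (hu : sobEnergy s u ≠ ⊤)
    (hv : sobEnergy s v ≠ ⊤) (hu' : sobEnergy s u' ≠ ⊤) (hv' : sobEnergy s v' ≠ ⊤) :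
    hnorm2 s (vecB2Qfst N t u v - vecB2Qfst N t u' v') (vecB2Qsnd N t u v - vecB2Qsnd N t u' v') ≤
      √(128 * squeezeConst s).toReal / N * hnorm2 s (u - u') (v - v') *
        (hnorm2 s u v + hnorm2 s u' v') := by
  have := squeezeConst_ne_top s
  have hN' : (N : ℝ≥0∞)⁻¹ ≠ ⊤ := ENNReal.inv_ne_top.mpr (by exact_mod_cast hN.ne')
  have hdu := sobEnergy_sub_ne_top hu hu'
  have hdv := sobEnergy_sub_ne_top hv hv'
  have hbound := sobEnergy_vecB2Q_sub_le hs N t hu hv hu' hv'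
  have hdF := ENNReal.add_ne_top.mp (ne_top_of_le_ne_top (by finiteness) hbound)
  rw [hnorm2_eq hdF.1 hdF.2, hnorm2_eq hdu hdv, hnorm2_eq hu hv, hnorm2_eq hu' hv', mul_assoc]
  refine (sqrt_toReal_le_of_le_mul_inv_sq hN (by finiteness) (by finiteness) hbound).trans ?_
  gcongr
  exact sqrt_toReal_mul_add_le _ (by finiteness) (by finiteness)

end Norms

/-- Squeezing property of the high-mode bilinear vector
operator `𝐁₂^𝒬`. -/
theorem b2Q_squeezing (s : ℝ) (hs : 0 ≤ s) :
    ∃ C : ℝ, ∀ N : ℕ, 0 < N → ∀ t : ℝ, ∀ u v u' v' : ℤ → ℂ,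
      memH s u → memH s v → memH s u' → memH s v' →
      (memH s (vecB2Qfst N t u v) ∧ memH s (vecB2Qsnd N t u v)) ∧
      hnorm2 s (vecB2Qfst N t u v) (vecB2Qsnd N t u v) ≤
        C / (N : ℝ) * hnorm2 s u v ^ 2 ∧
      hnorm2 s (fun k => vecB2Qfst N t u v k - vecB2Qfst N t u' v' k)
          (fun k => vecB2Qsnd N t u v k - vecB2Qsnd N t u' v' k) ≤
        C / (N : ℝ) * hnorm2 s (fun k => u k - u' k) (fun k => v k - v' k) *
          (hnorm2 s u v + hnorm2 s u' v') := by
  refine ⟨√(128 * squeezeConst s).toReal, fun N hN t u v u' v' hu hv hu' hv' => ?_⟩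
  simp only [memH_iff_sobEnergy_ne_top] at hu hv hu' hv' ⊢
  exact ⟨sobEnergy_vecB2Q_ne_top hs hN t hu hv, hnorm2_vecB2Q_le hs hN t hu hv,
    hnorm2_vecB2Q_sub_le hs hN t hu hv hu' hv'⟩
end
end

section
/- (Trilinear estimate for R_3 restricted to an arbitrary index set) Let s > 1/2 and let 𝒟 be any subset of triples of nonzero integers. Then for every t ∈ ℝ the operator R_3^𝒟, defined componentwise for k ≠ 0 by R_3^𝒟(φ,ψ,ξ)_k = Σ_{k1+k2+k3=k, (k1,k2,k3)∈𝒟} e^{3 i (k1+k2)(k2+k3)(k1+k3) t} φ_{k1} ψ_{k2} ξ_{k3} / k1, maps (Ḣ^s)³ into Ḣ^s and satisfies ‖R_3^𝒟(φ,ψ,ξ)‖_{Ḣ^s} ≤ C(s) ‖φ‖_{Ḣ^s} ‖ψ‖_{Ḣ^s} ‖ξ‖_{Ḣ^s}, where the constant C(s) does not depend on 𝒟 or t. -/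
open MeasureTheory Set

noncomputable section

attribute [local instance] Classical.propDecidable

/-- The operator `R₃` restricted to an arbitrary index set `𝒟`. -/
def R3D (D : Set (ℤ × ℤ × ℤ)) (t : ℝ) (φ ψ ξ : ℤ → ℂ) : ℤ → ℂ := fun k =>
  ∑' p : ℤ × ℤ,
    if p.1 ≠ 0 ∧ p.2 ≠ 0 ∧ k - p.1 - p.2 ≠ 0 ∧ (p.1, p.2, k - p.1 - p.2) ∈ D then
      osc3 t p.1 p.2 (k - p.1 - p.2) * φ p.1 * ψ p.2 * ξ (k - p.1 - p.2) / (p.1 : ℂ)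
    else 0

/-!
With `a_n = |n|^s |φ_n|` (similarly `b`, `c`) and `k₃ = k - k₁ - k₂`, Cauchy–Schwarz in `(k₁, k₂)`
against the weight `|k|^s |k₁|^{-1-s} |k₂|^{-s} |k₃|^{-s}` gives
`|k|^{2s} |R₃^𝒟(φ,ψ,ξ)_k|² ≤ C(s) Σ a_{k₁}² b_{k₂}² c_{k₃}²`, because `|k|^{2s}` is at most
`9^s (|k₁|^{2s} + |k₂|^{2s} + |k₃|^{2s})` and each of the three resulting squared weights, summed
over `(k₁, k₂)`, is bounded uniformly in `k` by a multiple of `ζ(2) ζ(2s)`, finite as `2s > 1`.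
Summing over `k` factors the right side into `C(s) ‖φ‖² ‖ψ‖² ‖ξ‖²`. The phase and the restriction
to `𝒟` only lower absolute values. All sums are taken in `ℝ≥0∞`, where they always exist.
-/

open scoped ENNReal

theorem ENNReal.sq_tsum_mul_le_s11 {ι : Type*} (f g : ι → ℝ≥0∞) :
    (∑' i, f i * g i) ^ 2 ≤ (∑' i, f i ^ 2) * ∑' i, g i ^ 2 := by
  let _ : MeasurableSpace ι := ⊤
  have holder := ENNReal.lintegral_mul_le_Lp_mul_Lq Measure.count Real.HolderConjugate.two_two
    measurable_from_top.aemeasurable measurable_from_top.aemeasurable (f := f) (g := g)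
  simp only [lintegral_count, Pi.mul_apply, ENNReal.rpow_two] at holder
  calc (∑' i, f i * g i) ^ 2
      ≤ ((∑' i, f i ^ 2) ^ (1 / 2 : ℝ) * (∑' i, g i ^ 2) ^ (1 / 2 : ℝ)) ^ 2 := by gcongr
    _ = (∑' i, f i ^ 2) * ∑' i, g i ^ 2 := by
      rw [mul_pow, ← ENNReal.rpow_natCast, ← ENNReal.rpow_natCast, ← ENNReal.rpow_mul,
        ← ENNReal.rpow_mul]
      norm_num

theorem ENNReal.tsum_prod_sub_eq (F : ℤ → ℤ → ℝ≥0∞) (k : ℤ) :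
    ∑' p : ℤ × ℤ, F p.1 (k - p.1 - p.2) = ∑' p : ℤ × ℤ, F p.1 p.2 :=
  (Equiv.prodCongrRight fun a => Equiv.subLeft (k - a)).tsum_eq fun p => F p.1 p.2

theorem ENNReal.tsum_prod_mul_eq (f g : ℤ → ℝ≥0∞) :
    ∑' p : ℤ × ℤ, f p.1 * g p.2 = (∑' n, f n) * ∑' n, g n := by
  rw [ENNReal.tsum_prod (f := fun a b => f a * g b), ← ENNReal.tsum_mul_right]
  exact tsum_congr fun a => ENNReal.tsum_mul_left

theorem ENNReal.tsum_tsum_conv3_eq_mul (f g h : ℤ → ℝ≥0∞) :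
    ∑' k : ℤ, ∑' p : ℤ × ℤ, f p.1 * g p.2 * h (k - p.1 - p.2) =
      (∑' n, f n) * (∑' n, g n) * ∑' n, h n := by
  rw [ENNReal.tsum_comm, ← ENNReal.tsum_prod_mul_eq, ← ENNReal.tsum_mul_right]
  refine tsum_congr fun p => ?_
  rw [ENNReal.tsum_mul_left]
  congr 1
  simp only [sub_sub]
  exact (Equiv.subRight (p.1 + p.2)).tsum_eq h

/-- `|n|^θ`, extended by `0` at `n = 0` (the mode that `Ḣ^s` ignores). -/
def absRpow (θ : ℝ) (n : ℤ) : ℝ≥0∞ := if n = 0 then 0 else (n.natAbs : ℝ≥0∞) ^ θ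

theorem absRpow_of_ne_zero (θ : ℝ) {n : ℤ} (hn : n ≠ 0) :
    absRpow θ n = (n.natAbs : ℝ≥0∞) ^ θ := if_neg hn

theorem absRpow_of_pos {θ : ℝ} (hθ : 0 < θ) (n : ℤ) :
    absRpow θ n = (n.natAbs : ℝ≥0∞) ^ θ := by
  rcases eq_or_ne n 0 with rfl | hn
  · simp [absRpow, ENNReal.zero_rpow_of_pos hθ]
  · exact absRpow_of_ne_zero θ hn

theorem absRpow_mul_absRpow (α β : ℝ) (n : ℤ) :
    absRpow α n * absRpow β n = absRpow (α + β) n := by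
  rcases eq_or_ne n 0 with rfl | hn
  · simp [absRpow]
  · simp only [absRpow_of_ne_zero _ hn]
    exact (ENNReal.rpow_add α β (by simpa using hn) (by simp)).symm

theorem absRpow_sq (θ : ℝ) (n : ℤ) : absRpow θ n ^ 2 = absRpow (2 * θ) n := by
  rw [sq, absRpow_mul_absRpow, two_mul]

theorem absRpow_mono {α β : ℝ} (hαβ : α ≤ β) (n : ℤ) : absRpow α n ≤ absRpow β n := by
  rcases eq_or_ne n 0 with rfl | hn
  · simp [absRpow]
  · simp only [absRpow_of_ne_zero _ hn]
    exact ENNReal.rpow_le_rpow_of_exponent_le (by simpa [Nat.one_le_iff_ne_zero] using hn) hαβ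

theorem absRpow_le_one {θ : ℝ} (hθ : θ ≤ 0) (n : ℤ) : absRpow θ n ≤ 1 := by
  refine (absRpow_mono hθ n).trans ?_
  unfold absRpow
  split_ifs <;> simp

theorem absRpow_neg_one {n : ℤ} (hn : n ≠ 0) : absRpow (-1) n = ‖(n : ℂ)‖ₑ⁻¹ := by
  rw [absRpow_of_ne_zero _ hn, ENNReal.rpow_neg_one, ← ofReal_norm, Complex.norm_intCast,
    ← Int.cast_abs, ← Nat.cast_natAbs, ENNReal.ofReal_natCast]

theorem absRpow_add_add_le {r : ℝ} (hr : 0 < r) (a b c : ℤ) :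
    absRpow r (a + b + c) ≤ 3 ^ r * (absRpow r a + absRpow r b + absRpow r c) := by
  simp only [absRpow_of_pos hr]
  have hmono : Monotone fun x : ℝ≥0∞ => x ^ r := fun _ _ h => ENNReal.rpow_le_rpow h hr.le
  set M := max (a.natAbs : ℝ≥0∞) (max (b.natAbs : ℝ≥0∞) (c.natAbs : ℝ≥0∞))
  have h_sum_le : ((a + b + c).natAbs : ℝ≥0∞) ≤ 3 * M := by
    have := (Int.natAbs_add_le (a + b) c).trans (Nat.add_le_add_right (Int.natAbs_add_le a b) _)
    calc ((a + b + c).natAbs : ℝ≥0∞) ≤ a.natAbs + b.natAbs + c.natAbs := by exact_mod_cast this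
      _ ≤ M + M + M := by gcongr <;> simp [M]
      _ = 3 * M := by ring
  have h_max_le :
      M ^ r ≤ (a.natAbs : ℝ≥0∞) ^ r + (b.natAbs : ℝ≥0∞) ^ r + (c.natAbs : ℝ≥0∞) ^ r := by
    simp only [M, hmono.map_max, max_le_iff]
    refine ⟨?_, ?_, ?_⟩
    · exact le_add_right (le_add_right le_rfl)
    · exact le_add_right (le_add_left le_rfl)
    · exact le_add_left le_rfl
  calc ((a + b + c).natAbs : ℝ≥0∞) ^ r ≤ (3 * M) ^ r := hmono h_sum_le
    _ = 3 ^ r * M ^ r := ENNReal.mul_rpow_of_nonneg _ _ hr.le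
    _ ≤ _ := by gcongr

theorem tsum_absRpow_ne_top {θ : ℝ} (hθ : θ < -1) : ∑' n : ℤ, absRpow θ n ≠ ⊤ := by
  have hsum : Summable fun n : ℤ => |(n : ℝ)| ^ θ := by
    simpa using Real.summable_abs_int_rpow (b := -θ) (by linarith)
  refine ne_top_of_le_ne_top hsum.tsum_ofReal_ne_top (ENNReal.tsum_le_tsum fun n => ?_)
  rcases eq_or_ne n 0 with rfl | hn
  · simp [absRpow]
  · rw [absRpow_of_ne_zero _ hn, ← ENNReal.ofReal_rpow_of_pos (by positivity), ← Int.cast_abs,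
      ← Nat.cast_natAbs, ENNReal.ofReal_natCast]

def hWeight (s : ℝ) (u : ℤ → ℂ) (n : ℤ) : ℝ≥0∞ := absRpow s n * ‖u n‖ₑ

/-- The square of `hnorm s u`, computed in `ℝ≥0∞` (hence `⊤` off `Ḣ^s`). -/
def ehnormSq (s : ℝ) (u : ℤ → ℂ) : ℝ≥0∞ := ∑' n : ℤ, hWeight s u n ^ 2

theorem ofReal_wt_mul_sq (s : ℝ) (u : ℤ → ℂ) {k : ℤ} (hk : k ≠ 0) :
    ENNReal.ofReal (wt s k * ‖u k‖ ^ 2) = hWeight s u k ^ 2 := by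
  have habs : ((|k| : ℤ) : ℝ) = k.natAbs := by simp
  rw [wt, habs, ENNReal.ofReal_mul (by positivity), ← ENNReal.ofReal_rpow_of_pos (by positivity),
    ENNReal.ofReal_natCast, ENNReal.ofReal_pow (norm_nonneg _), ofReal_norm, hWeight, mul_pow,
    absRpow_sq, absRpow_of_ne_zero _ hk, mul_comm 2 s]

theorem tsum_ofReal_wt_mul_sq (s : ℝ) (u : ℤ → ℂ) :
    ∑' k : {k : ℤ // k ≠ 0}, ENNReal.ofReal (wt s k * ‖u k‖ ^ 2) = ehnormSq s u := by
  have hsupp : Function.support (fun n : ℤ => hWeight s u n ^ 2) ⊆ {k | k ≠ 0} := by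
    rintro n hn rfl
    simp [hWeight, absRpow] at hn
  rw [ehnormSq, ← tsum_subtype_eq_of_support_subset hsupp]
  exact tsum_congr fun k => ofReal_wt_mul_sq s u k.2

theorem memH_iff_ehnormSq_ne_top (s : ℝ) (u : ℤ → ℂ) : memH s u ↔ ehnormSq s u ≠ ⊤ := by
  rw [memH, ← tsum_ofReal_wt_mul_sq]
  refine ⟨Summable.tsum_ofReal_ne_top, fun h => ?_⟩
  simpa [ENNReal.toReal_ofReal, wt, mul_nonneg, Real.rpow_nonneg] using ENNReal.summable_toReal h

theorem hnorm_eq_sqrt_ehnormSq (s : ℝ) (u : ℤ → ℂ) :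
    hnorm s u = Real.sqrt (ehnormSq s u).toReal := by
  by_cases hu : memH s u
  · have hnonneg (k : {k : ℤ // k ≠ 0}) : 0 ≤ wt s k * ‖u k‖ ^ 2 := by unfold wt; positivity
    rw [hnorm, ← tsum_ofReal_wt_mul_sq, ← ENNReal.ofReal_tsum_of_nonneg hnonneg hu,
      ENNReal.toReal_ofReal (tsum_nonneg hnonneg)]
  · have htop : ehnormSq s u = ⊤ := not_not.mp ((memH_iff_ehnormSq_ne_top s u).not.mp hu)
    rw [hnorm, tsum_eq_zero_of_not_summable hu, htop, ENNReal.toReal_top]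

theorem absRpow_zero {n : ℤ} (hn : n ≠ 0) : absRpow 0 n = 1 := by
  rw [absRpow_of_ne_zero _ hn, ENNReal.rpow_zero]

theorem absRpow_mul_hWeight (θ s : ℝ) (u : ℤ → ℂ) (n : ℤ) :
    absRpow θ n * hWeight s u n = absRpow (θ + s) n * ‖u n‖ₑ := by
  rw [hWeight, ← mul_assoc, absRpow_mul_absRpow]

theorem enorm_osc3 (t : ℝ) (a b c : ℤ) : ‖osc3 t a b c‖ₑ = 1 := by
  rw [osc3, ← ofReal_norm, Complex.norm_exp]
  simp [Complex.mul_re, Complex.mul_im]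

theorem enorm_r3Term_eq (s t : ℝ) (φ ψ ξ : ℤ → ℂ) {a b c : ℤ} (ha : a ≠ 0) (hb : b ≠ 0)
    (hc : c ≠ 0) :
    ‖osc3 t a b c * φ a * ψ b * ξ c / (a : ℂ)‖ₑ =
      absRpow (-(1 + s)) a * absRpow (-s) b * absRpow (-s) c *
        (hWeight s φ a * hWeight s ψ b * hWeight s ξ c) := by
  have hφ := absRpow_mul_hWeight (-(1 + s)) s φ a
  have hψ := absRpow_mul_hWeight (-s) s ψ b
  have hξ := absRpow_mul_hWeight (-s) s ξ c
  rw [show -(1 + s) + s = -1 by ring, absRpow_neg_one ha] at hφ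
  rw [neg_add_cancel, absRpow_zero hb, one_mul] at hψ
  rw [neg_add_cancel, absRpow_zero hc, one_mul] at hξ
  calc ‖osc3 t a b c * φ a * ψ b * ξ c / (a : ℂ)‖ₑ
      = ‖(a : ℂ)‖ₑ⁻¹ * ‖φ a‖ₑ * ‖ψ b‖ₑ * ‖ξ c‖ₑ := by
        rw [div_eq_mul_inv, enorm_mul, enorm_mul, enorm_mul, enorm_mul, enorm_osc3,
          enorm_inv (by exact_mod_cast ha)]
        ring
    _ = _ := by rw [← hφ, ← hψ, ← hξ]; ring

/-- The weight for Cauchy–Schwarz in the sum over `p = (k₁, k₂)` defining `R₃^𝒟(φ,ψ,ξ)_k`. -/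
def r3Kernel (s : ℝ) (k : ℤ) (p : ℤ × ℤ) : ℝ≥0∞ :=
  absRpow s k * absRpow (-(1 + s)) p.1 * absRpow (-s) p.2 * absRpow (-s) (k - p.1 - p.2)

theorem hWeight_R3D_le (s : ℝ) (D : Set (ℤ × ℤ × ℤ)) (t : ℝ) (φ ψ ξ : ℤ → ℂ) (k : ℤ) :
    hWeight s (R3D D t φ ψ ξ) k ≤ ∑' p : ℤ × ℤ,
      r3Kernel s k p * (hWeight s φ p.1 * hWeight s ψ p.2 * hWeight s ξ (k - p.1 - p.2)) := by
  rw [hWeight, R3D]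
  refine (mul_le_mul_right enorm_tsum_le_tsum_enorm _).trans ?_
  rw [← ENNReal.tsum_mul_left]
  refine ENNReal.tsum_le_tsum fun p => ?_
  split_ifs with hp
  · obtain ⟨h1, h2, h3, -⟩ := hp
    rw [enorm_r3Term_eq s t φ ψ ξ h1 h2 h3, r3Kernel]
    exact le_of_eq (by ring)
  · simp

/-- Distribute `|k|^{2s}` over `k₁ + k₂ + k₃ = k`: whichever frequency absorbs it, what is left
is summable in `(k₁, k₂)`. -/
theorem absRpow_add_add_mul_le {s : ℝ} (hs : 0 < s) (a b c : ℤ) :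
    absRpow (2 * s) (a + b + c) *
        (absRpow (-(2 + 2 * s)) a * absRpow (-(2 * s)) b * absRpow (-(2 * s)) c) ≤
      3 ^ (2 * s) * (2 * (absRpow (-2) a * absRpow (-(2 * s)) b) +
        absRpow (-2) a * absRpow (-(2 * s)) c) := by
  set L := absRpow (-(2 + 2 * s)) a * absRpow (-(2 * s)) b * absRpow (-(2 * s)) c
  have h_le_one : ∀ n, absRpow (-(2 * s)) n ≤ 1 := absRpow_le_one (by linarith)
  have hL : absRpow (-(2 + 2 * s)) a ≤ absRpow (-2) a := absRpow_mono (by linarith) a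
  have hA : absRpow (2 * s) a * L ≤ absRpow (-2) a * absRpow (-(2 * s)) b := by
    calc absRpow (2 * s) a * L
        = absRpow (2 * s) a * absRpow (-(2 + 2 * s)) a * absRpow (-(2 * s)) b *
            absRpow (-(2 * s)) c := by ring
      _ ≤ absRpow (-2) a * absRpow (-(2 * s)) b * 1 := by
        rw [absRpow_mul_absRpow, show 2 * s + -(2 + 2 * s) = -2 by ring]
        gcongr
        exact h_le_one c
      _ = _ := mul_one _
  have hB : absRpow (2 * s) b * L ≤ absRpow (-2) a * absRpow (-(2 * s)) c := by
    calc absRpow (2 * s) b * L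
        = absRpow (-(2 + 2 * s)) a * (absRpow (2 * s) b * absRpow (-(2 * s)) b) *
            absRpow (-(2 * s)) c := by ring
      _ ≤ absRpow (-2) a * 1 * absRpow (-(2 * s)) c := by
        rw [absRpow_mul_absRpow, add_neg_cancel]
        gcongr
        exact absRpow_le_one le_rfl b
      _ = _ := by rw [mul_one]
  have hC : absRpow (2 * s) c * L ≤ absRpow (-2) a * absRpow (-(2 * s)) b := by
    calc absRpow (2 * s) c * L
        = absRpow (-(2 + 2 * s)) a * absRpow (-(2 * s)) b *
            (absRpow (2 * s) c * absRpow (-(2 * s)) c) := by ring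
      _ ≤ absRpow (-2) a * absRpow (-(2 * s)) b * 1 := by
        rw [absRpow_mul_absRpow, add_neg_cancel]
        gcongr
        exact absRpow_le_one le_rfl c
      _ = _ := mul_one _
  calc absRpow (2 * s) (a + b + c) * L
      ≤ 3 ^ (2 * s) * (absRpow (2 * s) a + absRpow (2 * s) b + absRpow (2 * s) c) * L := by
        gcongr
        exact absRpow_add_add_le (by positivity) a b c
    _ = 3 ^ (2 * s) * (absRpow (2 * s) a * L + absRpow (2 * s) c * L +
          absRpow (2 * s) b * L) := by ring
    _ ≤ 3 ^ (2 * s) * (absRpow (-2) a * absRpow (-(2 * s)) b +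
          absRpow (-2) a * absRpow (-(2 * s)) b + absRpow (-2) a * absRpow (-(2 * s)) c) := by
      gcongr
    _ = _ := by ring

def r3Const (s : ℝ) : ℝ≥0∞ :=
  3 * 3 ^ (2 * s) * (∑' n : ℤ, absRpow (-2) n) * ∑' n : ℤ, absRpow (-(2 * s)) n

theorem r3Const_ne_top {s : ℝ} (hs : 1 / 2 < s) : r3Const s ≠ ⊤ := by
  have h3 : (3 : ℝ≥0∞) ^ (2 * s) ≠ ⊤ := ENNReal.rpow_ne_top_of_nonneg (by linarith) (by simp)
  have h2 := tsum_absRpow_ne_top (θ := -2) (by norm_num)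
  have h2s := tsum_absRpow_ne_top (θ := -(2 * s)) (by linarith)
  unfold r3Const
  finiteness

theorem tsum_r3Kernel_sq_le {s : ℝ} (hs : 0 < s) (k : ℤ) :
    ∑' p : ℤ × ℤ, r3Kernel s k p ^ 2 ≤ r3Const s := by
  set f := absRpow (-2)
  set g := absRpow (-(2 * s))
  have hpt : ∀ p : ℤ × ℤ, r3Kernel s k p ^ 2 ≤
      3 ^ (2 * s) * (2 * (f p.1 * g p.2) + f p.1 * g (k - p.1 - p.2)) := fun p => by
    have := absRpow_add_add_mul_le hs p.1 p.2 (k - p.1 - p.2)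
    rw [show p.1 + p.2 + (k - p.1 - p.2) = k by ring] at this
    simp only [r3Kernel, mul_pow, absRpow_sq]
    convert this using 1
    ring_nf
  calc ∑' p : ℤ × ℤ, r3Kernel s k p ^ 2
      ≤ ∑' p : ℤ × ℤ, 3 ^ (2 * s) * (2 * (f p.1 * g p.2) + f p.1 * g (k - p.1 - p.2)) :=
        ENNReal.tsum_le_tsum hpt
    _ = 3 ^ (2 * s) * (2 * ∑' p : ℤ × ℤ, f p.1 * g p.2 +
          ∑' p : ℤ × ℤ, f p.1 * g (k - p.1 - p.2)) := by
        rw [ENNReal.tsum_mul_left, ENNReal.tsum_add, ENNReal.tsum_mul_left]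
    _ = r3Const s := by
        rw [ENNReal.tsum_prod_sub_eq (fun a b => f a * g b), ENNReal.tsum_prod_mul_eq, r3Const]
        ring

theorem ehnormSq_R3D_le {s : ℝ} (hs : 0 < s) (D : Set (ℤ × ℤ × ℤ)) (t : ℝ) (φ ψ ξ : ℤ → ℂ) :
    ehnormSq s (R3D D t φ ψ ξ) ≤ r3Const s * ehnormSq s φ * ehnormSq s ψ * ehnormSq s ξ := by
  have hpt : ∀ k : ℤ, hWeight s (R3D D t φ ψ ξ) k ^ 2 ≤ r3Const s * ∑' p : ℤ × ℤ,
      hWeight s φ p.1 ^ 2 * hWeight s ψ p.2 ^ 2 * hWeight s ξ (k - p.1 - p.2) ^ 2 := fun k =>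
    calc hWeight s (R3D D t φ ψ ξ) k ^ 2
        ≤ (∑' p : ℤ × ℤ, r3Kernel s k p *
            (hWeight s φ p.1 * hWeight s ψ p.2 * hWeight s ξ (k - p.1 - p.2))) ^ 2 := by
          gcongr
          exact hWeight_R3D_le s D t φ ψ ξ k
      _ ≤ (∑' p : ℤ × ℤ, r3Kernel s k p ^ 2) * ∑' p : ℤ × ℤ,
            (hWeight s φ p.1 * hWeight s ψ p.2 * hWeight s ξ (k - p.1 - p.2)) ^ 2 :=
          ENNReal.sq_tsum_mul_le_s11 _ _
      _ ≤ _ := by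
          simp only [mul_pow]
          gcongr
          exact tsum_r3Kernel_sq_le hs k
  calc ehnormSq s (R3D D t φ ψ ξ)
      ≤ ∑' k : ℤ, r3Const s * ∑' p : ℤ × ℤ,
          hWeight s φ p.1 ^ 2 * hWeight s ψ p.2 ^ 2 * hWeight s ξ (k - p.1 - p.2) ^ 2 :=
        ENNReal.tsum_le_tsum hpt
    _ = _ := by
        rw [ENNReal.tsum_mul_left, ENNReal.tsum_tsum_conv3_eq_mul (fun n => hWeight s φ n ^ 2)
          (fun n => hWeight s ψ n ^ 2) (fun n => hWeight s ξ n ^ 2), ehnormSq, ehnormSq, ehnormSq]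
        ring

/-- Trilinear estimate for `R₃` restricted to an arbitrary
index set, uniformly in the index set and in time. -/
theorem r3_restricted_estimate (s : ℝ) (hs : 1 / 2 < s) :
    ∃ C : ℝ, ∀ D : Set (ℤ × ℤ × ℤ), ∀ t : ℝ, ∀ φ ψ ξ : ℤ → ℂ,
      memH s φ → memH s ψ → memH s ξ →
      memH s (R3D D t φ ψ ξ) ∧
      hnorm s (R3D D t φ ψ ξ) ≤ C * hnorm s φ * hnorm s ψ * hnorm s ξ := by
  refine ⟨Real.sqrt (r3Const s).toReal, fun D t φ ψ ξ hφ hψ hξ => ?_⟩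
  simp only [memH_iff_ehnormSq_ne_top, hnorm_eq_sqrt_ehnormSq] at *
  have hR := ehnormSq_R3D_le (by linarith) D t φ ψ ξ
  have hbound : r3Const s * ehnormSq s φ * ehnormSq s ψ * ehnormSq s ξ ≠ ⊤ := by
    have := r3Const_ne_top hs
    finiteness
  refine ⟨ne_top_of_le_ne_top hbound hR, ?_⟩
  calc Real.sqrt (ehnormSq s (R3D D t φ ψ ξ)).toReal
      ≤ Real.sqrt (r3Const s * ehnormSq s φ * ehnormSq s ψ * ehnormSq s ξ).toReal := by
        gcongr
    _ = _ := by simp only [ENNReal.toReal_mul, Real.sqrt_mul', ENNReal.toReal_nonneg]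
end
end
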